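/- arXiv:2112.10248 — 8 statements merged into one kernel-verified Lean document; each statement's English description precedes it below -/
import Mathlib

section
/- Let X_1, …, X_K be independent Pareto(γ) random variables on a common probability space, with γ > 0, and let a_1, …, a_K ≥ 0 be constants, not all zero. Then lim_{r→∞} r^γ · P(Σ_{k=1}^K a_k X_k > r) = Σ_{k=1}^K a_k^γ. -/
open MeasureTheory ProbabilityTheory Filter Finset
open scoped Topology

/-!
Write `S = ∑ aₖ ^ γ` and `w = r ^ (-γ)`; once `s ≥ aₖ`, `P(aₖ Xₖ > s) = aₖ ^ γ s ^ (-γ)`.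
Since the `Xₖ` are a.s. positive, each event `{aₖ Xₖ > r}` lies in `{∑ aₖ Xₖ > r}`, and by the
second Bonferroni inequality and pairwise independence their union has probability at least
`S w - (S w) ^ 2`. Conversely, if `∑ aₖ Xₖ > r`, then either one term exceeds `(1 - δ) r` or two
distinct terms exceed `δ r / K`, which gives the bound `S (1 - δ) ^ (-γ) w + C_δ w ^ 2`.
Multiplying by `r ^ γ` and letting `r → ∞`, then `δ → 0`, squeezes the limit to `S`.
-/

lemma Finset.sum_offDiag_add_sum_le_sum_offDiag_insert {ι : Type*} [DecidableEq ι]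
    {s : Finset ι} {a : ι} (ha : a ∉ s) {f : ι × ι → ℝ} (hf : ∀ p, 0 ≤ f p) :
    ∑ p ∈ s.offDiag, f p + ∑ i ∈ s, f (a, i) ≤ ∑ p ∈ (insert a s).offDiag, f p := by
  have hdisj : Disjoint s.offDiag ({a} ×ˢ s) := by
    simp only [Finset.disjoint_left, mem_offDiag, mem_product, mem_singleton]
    rintro p ⟨hp, -⟩ ⟨rfl, -⟩
    exact ha hp
  calc ∑ p ∈ s.offDiag, f p + ∑ i ∈ s, f (a, i)
      = ∑ p ∈ s.offDiag ∪ {a} ×ˢ s, f p := by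
        rw [sum_union hdisj, sum_product, sum_singleton]
    _ ≤ ∑ p ∈ (insert a s).offDiag, f p := by
        rw [offDiag_insert ha]
        exact sum_le_sum_of_subset_of_nonneg subset_union_left fun p _ _ => hf p

lemma exists_lt_or_exists_pair_lt_of_lt_sum {ι : Type*} [Fintype ι] {t : ι → ℝ} {u c : ℝ}
    (hu : 0 ≤ u) (hc : 0 ≤ c) (h : u + Fintype.card ι * c < ∑ k, t k) :
    (∃ k, u < t k) ∨ ∃ i j, i ≠ j ∧ c < t i ∧ c < t j := by
  classical
  by_contra! hno
  obtain ⟨hsmall, hpair⟩ := hno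
  by_cases hbig : ∃ i, c < t i
  · obtain ⟨i, hi⟩ := hbig
    have hrest : ∑ k ∈ univ.erase i, t k ≤ Fintype.card ι * c :=
      calc ∑ k ∈ univ.erase i, t k ≤ ∑ _k ∈ univ.erase i, c :=
            sum_le_sum fun k hk => hpair i k (ne_of_mem_erase hk).symm hi
        _ ≤ Fintype.card ι * c := by
            rw [sum_const, nsmul_eq_mul]
            gcongr
            exact_mod_cast card_le_univ _
    rw [← add_sum_erase _ _ (mem_univ i)] at h
    linarith [hsmall i]
  · push Not at hbig
    have hsum : ∑ k, t k ≤ Fintype.card ι * c := by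
      simpa using sum_le_sum fun k (_ : k ∈ univ) => hbig k
    linarith

lemma exists_mem_Ioo_mul_one_sub_rpow_lt {S b : ℝ} (γ : ℝ) (hb : S < b) :
    ∃ δ ∈ Set.Ioo (0 : ℝ) 1, S * (1 - δ) ^ (-γ) < b := by
  have hcont : ContinuousAt (fun δ : ℝ => S * (1 - δ) ^ (-γ)) 0 := by fun_prop (disch := norm_num)
  have hlim : Tendsto (fun δ : ℝ => S * (1 - δ) ^ (-γ)) (𝓝[>] 0) (𝓝 S) := by
    simpa using hcont.tendsto.mono_left nhdsWithin_le_nhds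
  obtain ⟨δ, hδb, hδ⟩ := ((hlim.eventually (gt_mem_nhds hb)).and (Ioo_mem_nhdsGT one_pos)).exists
  exact ⟨δ, hδ, hδb⟩

namespace MeasureTheory

variable {Ω ι : Type*} [MeasurableSpace Ω] {μ : Measure Ω}

lemma measureReal_mono_ae [IsFiniteMeasure μ] {s t : Set Ω} (h : s ≤ᵐ[μ] t) :
    μ.real s ≤ μ.real t :=
  ENNReal.toReal_mono (measure_ne_top μ t) (measure_mono_ae h)

/-- The second Bonferroni inequality, with each pair of events counted in both orders. -/
lemma sum_measureReal_le_measureReal_biUnion_add [IsFiniteMeasure μ] [DecidableEq ι]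
    (s : Finset ι) {A : ι → Set Ω} (hA : ∀ i, MeasurableSet (A i)) :
    ∑ i ∈ s, μ.real (A i) ≤
      μ.real (⋃ i ∈ s, A i) + ∑ p ∈ s.offDiag, μ.real (A p.1 ∩ A p.2) := by
  induction s using Finset.induction_on with
  | empty => simp
  | insert a s ha ih =>
    have hunion := measureReal_union_add_inter (μ := μ) (s := A a)
      (s.measurableSet_biUnion fun i _ => hA i) (measure_ne_top _ _) (measure_ne_top _ _)
    have hinter : μ.real (A a ∩ ⋃ i ∈ s, A i) ≤ ∑ i ∈ s, μ.real (A a ∩ A i) := by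
      rw [Set.inter_iUnion₂]
      exact measureReal_biUnion_finset_le _ _
    have hpairs := sum_offDiag_add_sum_le_sum_offDiag_insert ha
      (f := fun p => μ.real (A p.1 ∩ A p.2)) fun _ => measureReal_nonneg
    rw [sum_insert ha, set_biUnion_insert]
    linarith

lemma sum_offDiag_measureReal_inter_le_sq (s : Finset ι) {A : ι → Set Ω}
    (hA : Pairwise fun i j => μ.real (A i ∩ A j) = μ.real (A i) * μ.real (A j)) :
    ∑ p ∈ s.offDiag, μ.real (A p.1 ∩ A p.2) ≤ (∑ i ∈ s, μ.real (A i)) ^ 2 := by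
  calc ∑ p ∈ s.offDiag, μ.real (A p.1 ∩ A p.2)
      = ∑ p ∈ s.offDiag, μ.real (A p.1) * μ.real (A p.2) :=
        sum_congr rfl fun p hp => hA (mem_offDiag.1 hp).2.2
    _ ≤ ∑ p ∈ s ×ˢ s, μ.real (A p.1) * μ.real (A p.2) :=
        sum_le_sum_of_subset_of_nonneg
          (fun p hp => mem_product.2 ⟨(mem_offDiag.1 hp).1, (mem_offDiag.1 hp).2.1⟩)
          fun _ _ _ => mul_nonneg measureReal_nonneg measureReal_nonneg
    _ = (∑ i ∈ s, μ.real (A i)) ^ 2 := by rw [sum_product, sq, sum_mul_sum]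

end MeasureTheory

section ParetoSum

variable {Ω : Type*} [MeasurableSpace Ω]

def HasParetoTail (P : Measure Ω) (γ : ℝ) (X : Ω → ℝ) : Prop :=
  ∀ x : ℝ, 1 ≤ x → P.real {ω | x < X ω} = x ^ (-γ)

variable {P : Measure Ω} {γ : ℝ}

lemma HasParetoTail.ae_one_lt [IsProbabilityMeasure P] {X : Ω → ℝ} (hX : Measurable X)
    (htail : HasParetoTail P γ X) : ∀ᵐ ω ∂P, 1 < X ω := by
  have hone : P {ω | 1 < X ω} = 1 := by
    rw [← ENNReal.toReal_eq_one_iff, ← measureReal_def]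
    simpa using htail 1 le_rfl
  exact ae_iff.2 ((prob_compl_eq_zero_iff (measurableSet_lt measurable_const hX)).2 hone)

lemma HasParetoTail.measureReal_lt_mul {X : Ω → ℝ} (htail : HasParetoTail P γ X) (hγ : 0 < γ)
    {c s : ℝ} (hc : 0 ≤ c) (hcs : c ≤ s) :
    P.real {ω | s < c * X ω} = c ^ γ * s ^ (-γ) := by
  rcases hc.eq_or_lt with rfl | hc
  · simp [not_lt.2 hcs, Real.zero_rpow hγ.ne']
  · have hdiv : {ω | s < c * X ω} = {ω | s / c < X ω} := by ext; simp [div_lt_iff₀' hc]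
    rw [hdiv, htail _ ((one_le_div hc).2 hcs), Real.div_rpow (hc.le.trans hcs) hc.le,
      Real.rpow_neg hc.le, div_eq_mul_inv, inv_inv, mul_comm]

variable {ι : Type*} {X : ι → Ω → ℝ}

lemma ProbabilityTheory.iIndepFun.measureReal_inter_lt_mul (hindep : iIndepFun X P) (s : ℝ)
    (a : ι → ℝ) :
    Pairwise fun i j => P.real ({ω | s < a i * X i ω} ∩ {ω | s < a j * X j ω}) =
      P.real {ω | s < a i * X i ω} * P.real {ω | s < a j * X j ω} := by
  intro i j hij
  have hmeas : ∀ k, MeasurableSet {x : ℝ | s < a k * x} := fun k =>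
    measurableSet_lt measurable_const (measurable_const_mul (a k))
  simp only [measureReal_def, ← ENNReal.toReal_mul]
  exact congrArg ENNReal.toReal
    ((hindep.indepFun hij).measure_inter_preimage_eq_mul _ _ (hmeas i) (hmeas j))

lemma sum_measureReal_lt_mul_of_hasParetoTail [Fintype ι] (hγ : 0 < γ)
    (htail : ∀ k, HasParetoTail P γ (X k)) {a : ι → ℝ} (ha : ∀ k, 0 ≤ a k) {s : ℝ}
    (hs : ∀ k, a k ≤ s) :
    ∑ k, P.real {ω | s < a k * X k ω} = (∑ k, a k ^ γ) * s ^ (-γ) := by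
  rw [sum_mul]
  exact sum_congr rfl fun k _ => (htail k).measureReal_lt_mul hγ (ha k) (hs k)

variable [IsProbabilityMeasure P] [Fintype ι] {a : ι → ℝ}

lemma sub_sq_le_measureReal_sum_mul_gt (hγ : 0 < γ) (hmeas : ∀ k, Measurable (X k))
    (hindep : iIndepFun X P) (htail : ∀ k, HasParetoTail P γ (X k)) (ha : ∀ k, 0 ≤ a k)
    {r : ℝ} (hr : ∀ k, a k ≤ r) :
    (∑ k, a k ^ γ) * r ^ (-γ) - ((∑ k, a k ^ γ) * r ^ (-γ)) ^ 2 ≤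
      P.real {ω | r < ∑ k, a k * X k ω} := by
  classical
  set A : ι → Set Ω := fun k => {ω | r < a k * X k ω}
  have hsum : ∑ k, P.real (A k) = (∑ k, a k ^ γ) * r ^ (-γ) :=
    sum_measureReal_lt_mul_of_hasParetoTail hγ htail ha hr
  have hbonferroni := sum_measureReal_le_measureReal_biUnion_add univ (μ := P) (A := A)
    fun k => measurableSet_lt measurable_const ((hmeas k).const_mul (a k))
  have hpairs := sum_offDiag_measureReal_inter_le_sq univ (hindep.measureReal_inter_lt_mul r a)
  have hunion : (⋃ k ∈ univ, A k) ≤ᵐ[P] {ω | r < ∑ k, a k * X k ω} := by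
    filter_upwards [ae_all_iff.2 fun k => (htail k).ae_one_lt (hmeas k)] with ω hX hω
    obtain ⟨k, -, hk⟩ := Set.mem_iUnion₂.1 hω
    exact hk.trans_le (single_le_sum (fun j _ => mul_nonneg (ha j) (zero_le_one.trans (hX j).le))
      (mem_univ k))
  have := measureReal_mono_ae hunion
  rw [hsum] at hbonferroni hpairs
  linarith

lemma measureReal_sum_mul_gt_le (hγ : 0 < γ) (hmeas : ∀ k, Measurable (X k))
    (hindep : iIndepFun X P) (htail : ∀ k, HasParetoTail P γ (X k)) (ha : ∀ k, 0 ≤ a k)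
    {r u c : ℝ} (hu : 0 ≤ u) (hc : 0 ≤ c) (hr : u + Fintype.card ι * c ≤ r)
    (hau : ∀ k, a k ≤ u) (hac : ∀ k, a k ≤ c) :
    P.real {ω | r < ∑ k, a k * X k ω} ≤
      (∑ k, a k ^ γ) * u ^ (-γ) + ((∑ k, a k ^ γ) * c ^ (-γ)) ^ 2 := by
  classical
  set A : ι → Set Ω := fun k => {ω | c < a k * X k ω}
  have hsplit : {ω | r < ∑ k, a k * X k ω} ≤ᵐ[P]
      ((⋃ k, {ω | u < a k * X k ω}) ∪ ⋃ p ∈ (univ : Finset ι).offDiag, A p.1 ∩ A p.2 :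
        Set Ω) := by
    filter_upwards [ae_all_iff.2 fun k => (htail k).ae_one_lt (hmeas k)] with ω hX hω
    rcases exists_lt_or_exists_pair_lt_of_lt_sum hu hc (hr.trans_lt hω) with
      ⟨k, hk⟩ | ⟨i, j, hij, hi, hj⟩
    · exact Or.inl (Set.mem_iUnion.2 ⟨k, hk⟩)
    · exact Or.inr (Set.mem_iUnion₂.2 ⟨(i, j), mem_offDiag.2 ⟨mem_univ i, mem_univ j, hij⟩, hi, hj⟩)
  calc P.real {ω | r < ∑ k, a k * X k ω}
      ≤ ∑ k, P.real {ω | u < a k * X k ω} +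
          ∑ p ∈ (univ : Finset ι).offDiag, P.real (A p.1 ∩ A p.2) :=
        (measureReal_mono_ae hsplit).trans <| (measureReal_union_le _ _).trans <|
          add_le_add (measureReal_iUnion_fintype_le _) (measureReal_biUnion_finset_le _ _)
    _ ≤ (∑ k, a k ^ γ) * u ^ (-γ) + ((∑ k, a k ^ γ) * c ^ (-γ)) ^ 2 := by
        rw [sum_measureReal_lt_mul_of_hasParetoTail hγ htail ha hau,
          ← sum_measureReal_lt_mul_of_hasParetoTail hγ htail ha hac]
        exact add_le_add_right
          (sum_offDiag_measureReal_inter_le_sq univ (hindep.measureReal_inter_lt_mul c a)) _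

lemma eventually_sub_le_rpow_mul_measureReal_sum_mul_gt (hγ : 0 < γ)
    (hmeas : ∀ k, Measurable (X k)) (hindep : iIndepFun X P)
    (htail : ∀ k, HasParetoTail P γ (X k)) (ha : ∀ k, 0 ≤ a k) :
    ∀ᶠ r in atTop, ∑ k, a k ^ γ - (∑ k, a k ^ γ) ^ 2 * r ^ (-γ) ≤
      r ^ γ * P.real {ω | r < ∑ k, a k * X k ω} := by
  filter_upwards [eventually_ge_atTop (∑ k, a k), eventually_gt_atTop 0] with r hr hr0
  have hbound := sub_sq_le_measureReal_sum_mul_gt hγ hmeas hindep htail ha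
    fun k => (single_le_sum (fun j _ => ha j) (mem_univ k)).trans hr
  have hrw : r ^ γ * r ^ (-γ) = 1 := by rw [← Real.rpow_add hr0, add_neg_cancel, Real.rpow_zero]
  calc ∑ k, a k ^ γ - (∑ k, a k ^ γ) ^ 2 * r ^ (-γ)
      = r ^ γ * ((∑ k, a k ^ γ) * r ^ (-γ) - ((∑ k, a k ^ γ) * r ^ (-γ)) ^ 2) := by
        linear_combination ((∑ k, a k ^ γ) ^ 2 * r ^ (-γ) - ∑ k, a k ^ γ) * hrw
    _ ≤ r ^ γ * P.real {ω | r < ∑ k, a k * X k ω} :=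
        mul_le_mul_of_nonneg_left hbound (by positivity)

lemma eventually_rpow_mul_measureReal_sum_mul_gt_le (hγ : 0 < γ)
    (hmeas : ∀ k, Measurable (X k)) (hindep : iIndepFun X P)
    (htail : ∀ k, HasParetoTail P γ (X k)) (ha : ∀ k, 0 ≤ a k) {δ : ℝ}
    (hδ : δ ∈ Set.Ioo 0 1) :
    ∀ᶠ r in atTop, r ^ γ * P.real {ω | r < ∑ k, a k * X k ω} ≤
      (∑ k, a k ^ γ) * (1 - δ) ^ (-γ) +
        (∑ k, a k ^ γ) ^ 2 * ((δ / Fintype.card ι) ^ (-γ)) ^ 2 * r ^ (-γ) := by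
  obtain ⟨hδ0, hδ1⟩ := hδ
  set S := ∑ k, a k ^ γ
  set N : ℝ := (Fintype.card ι : ℝ)
  have hM : ∀ k, a k ≤ ∑ j, a j := fun k => single_le_sum (fun j _ => ha j) (mem_univ k)
  filter_upwards [eventually_ge_atTop ((∑ k, a k) / (1 - δ)),
    eventually_ge_atTop (N * (∑ k, a k) / δ), eventually_gt_atTop 0] with r hru hrc hr0
  have hau : ∀ k, a k ≤ (1 - δ) * r := fun k =>
    (hM k).trans ((div_le_iff₀' (by linarith)).1 hru)
  have hac : ∀ k, a k ≤ δ / N * r := fun k => by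
    have hN : 0 < N := Nat.cast_pos.2 (Fintype.card_pos_iff.2 ⟨k⟩)
    rw [div_le_iff₀ hδ0] at hrc
    rw [div_mul_eq_mul_div, le_div_iff₀ hN]
    nlinarith [hM k]
  have hsplit : (1 - δ) * r + N * (δ / N * r) ≤ r := by
    have : N * (δ / N) ≤ δ := by
      rw [mul_div_left_comm]
      exact mul_le_of_le_one_right hδ0.le (div_self_le_one N)
    nlinarith
  have hbound := measureReal_sum_mul_gt_le hγ hmeas hindep htail ha (by positivity)
    (by positivity) hsplit hau hac
  rw [Real.mul_rpow (by linarith) hr0.le, Real.mul_rpow (by positivity) hr0.le] at hbound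
  have hrw : r ^ γ * r ^ (-γ) = 1 := by rw [← Real.rpow_add hr0, add_neg_cancel, Real.rpow_zero]
  calc r ^ γ * P.real {ω | r < ∑ k, a k * X k ω}
      ≤ r ^ γ * (S * ((1 - δ) ^ (-γ) * r ^ (-γ)) + (S * ((δ / N) ^ (-γ) * r ^ (-γ))) ^ 2) :=
        mul_le_mul_of_nonneg_left hbound (by positivity)
    _ = S * (1 - δ) ^ (-γ) + S ^ 2 * ((δ / N) ^ (-γ)) ^ 2 * r ^ (-γ) := by
        linear_combination (S * (1 - δ) ^ (-γ) + S ^ 2 * ((δ / N) ^ (-γ)) ^ 2 * r ^ (-γ)) * hrw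

end ParetoSum

theorem weighted_sum_pareto_tail_general
    {Ω : Type*} [MeasurableSpace Ω] (P : Measure Ω) [IsProbabilityMeasure P]
    (K : ℕ) (γ : ℝ) (hγ : 0 < γ) (X : Fin K → Ω → ℝ)
    (hmeas : ∀ k, Measurable (X k))
    (hindep : iIndepFun X P)
    (htail : ∀ k, ∀ x : ℝ, 1 ≤ x → (P {ω | x < X k ω}).toReal = x ^ (-γ))
    (a : Fin K → ℝ) (ha : ∀ k, 0 ≤ a k) :
    Tendsto (fun r : ℝ => r ^ γ * (P {ω | r < ∑ k, a k * X k ω}).toReal)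
      atTop (nhds (∑ k, (a k) ^ γ)) := by
  set S := ∑ k, a k ^ γ
  have hw : Tendsto (fun r : ℝ => r ^ (-γ)) atTop (𝓝 0) := tendsto_rpow_neg_atTop hγ
  refine tendsto_order.2 ⟨fun b hb => ?_, fun b hb => ?_⟩
  · have hlim : Tendsto (fun r : ℝ => S - S ^ 2 * r ^ (-γ)) atTop (𝓝 S) := by
      simpa using tendsto_const_nhds.sub (hw.const_mul (S ^ 2))
    filter_upwards [hlim.eventually (lt_mem_nhds hb),
      eventually_sub_le_rpow_mul_measureReal_sum_mul_gt hγ hmeas hindep htail ha]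
      with r hbr hr using hbr.trans_le hr
  · obtain ⟨δ, hδ, hδb⟩ := exists_mem_Ioo_mul_one_sub_rpow_lt γ hb
    have hlim : Tendsto (fun r : ℝ => S * (1 - δ) ^ (-γ) +
        S ^ 2 * ((δ / K) ^ (-γ)) ^ 2 * r ^ (-γ)) atTop (𝓝 (S * (1 - δ) ^ (-γ))) := by
      simpa using tendsto_const_nhds.add (hw.const_mul (S ^ 2 * ((δ / K) ^ (-γ)) ^ 2))
    filter_upwards [hlim.eventually (gt_mem_nhds hδb),
      eventually_rpow_mul_measureReal_sum_mul_gt_le hγ hmeas hindep htail ha hδ]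
      with r hbr hr using hr.trans_lt (by simpa using hbr)

/-- If `X 1, …, X K` are independent Pareto(γ) random variables (γ > 0)
and `a 1, …, a K ≥ 0` are constants, not all zero, then
`r^γ · P(∑ k, a k * X k > r) → ∑ k, (a k)^γ` as `r → ∞`. -/
theorem weighted_sum_pareto_tail
    {Ω : Type*} [MeasurableSpace Ω] (P : Measure Ω) [IsProbabilityMeasure P]
    (K : ℕ) (γ : ℝ) (hγ : 0 < γ) (X : Fin K → Ω → ℝ)
    (hmeas : ∀ k, Measurable (X k))
    (hindep : iIndepFun X P)
    (htail : ∀ k, ∀ x : ℝ, 1 ≤ x → (P {ω | x < X k ω}).toReal = x ^ (-γ))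
    (hlow : ∀ k, ∀ x : ℝ, x < 1 → (P {ω | x < X k ω}).toReal = 1)
    (a : Fin K → ℝ) (ha : ∀ k, 0 ≤ a k) (hne : ∃ k, a k ≠ 0) :
    Tendsto (fun r : ℝ => r ^ γ * (P {ω | r < ∑ k, a k * X k ω}).toReal)
      atTop (nhds (∑ k, (a k) ^ γ)) :=
  weighted_sum_pareto_tail_general P K γ hγ X hmeas hindep htail a ha
end

section
/- Let X_1, …, X_K be independent Pareto(γ) random variables, γ > 0, and let B_1, …, B_K ≥ 0 satisfy Σ_{k=1}^K B_k = 1. Define R = Σ_{k=1}^K B_k^{1/γ} X_k. Then lim_{r→∞} P(R > r) / r^{−γ} = 1; that is, the tail of R is asymptotically equivalent to the Pareto(γ) survival function 1 − F_{0,γ}(r) = r^{−γ}. -/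
/-!
With `Y k = B k ^ (1 / γ) * X k` one has `P(Y k > t) = B k * t ^ (-γ)` for `t ≥ 1`, tails that add
up to exactly `t ^ (-γ)`, and the tail of `R = ∑ Y k` is that of a single big jump. From below,
`R ≥ max Y k` and independence give `P(R > r) ≥ 1 - ∏ (1 - B k r^(-γ)) ≥ r^(-γ) - r^(-2γ)`. From
above, `R > r` forces either one `Y k > r - K r^(3/4)` or two distinct `Y j, Y k > r^(3/4)`, so
`P(R > r) ≤ (r - K r^(3/4))^(-γ) + r^(-3γ/2)`. Both bounds are `r^(-γ) (1 + o(1))`.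
-/

open MeasureTheory ProbabilityTheory Filter Topology

theorem Finset.prod_one_sub_le_one_sub_sum_add_sq {ι : Type*} (s : Finset ι) {a : ι → ℝ}
    (h0 : ∀ k ∈ s, 0 ≤ a k) (h1 : ∀ k ∈ s, a k ≤ 1) :
    ∏ k ∈ s, (1 - a k) ≤ 1 - ∑ k ∈ s, a k + (∑ k ∈ s, a k) ^ 2 := by
  induction s using Finset.cons_induction with
  | empty => simp
  | cons i s hi ih =>
    rw [Finset.prod_cons, Finset.sum_cons]
    have hs0 : 0 ≤ ∑ k ∈ s, a k :=
      Finset.sum_nonneg fun k hk => h0 k (Finset.mem_cons_of_mem hk)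
    have hai0 := h0 i (Finset.mem_cons_self i s)
    have hai1 := h1 i (Finset.mem_cons_self i s)
    have hstep := mul_le_mul_of_nonneg_left
      (ih (fun k hk => h0 k (Finset.mem_cons_of_mem hk))
        fun k hk => h1 k (Finset.mem_cons_of_mem hk))
      (sub_nonneg.2 hai1)
    nlinarith [mul_nonneg hai0 hs0, mul_nonneg (mul_nonneg hai0 hs0) hs0]

theorem exists_lt_or_exists_ne_lt_of_lt_sum {ι : Type*} [Fintype ι] {y : ι → ℝ} {r s a : ℝ}
    (hs : 0 ≤ s) (ha : 0 ≤ a) (hr : s + Fintype.card ι * a ≤ r) (h : r < ∑ k, y k) :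
    (∃ k, s < y k) ∨ ∃ j k, j ≠ k ∧ a < y j ∧ a < y k := by
  classical
  by_contra! hcon
  obtain ⟨hle_s, hpair⟩ := hcon
  have hsum_a : ∑ _k : ι, a = Fintype.card ι * a := by simp
  by_cases hbig : ∃ k₀, a < y k₀
  · obtain ⟨k₀, hk₀⟩ := hbig
    have hrest : ∑ k ∈ Finset.univ.erase k₀, y k ≤ Fintype.card ι * a :=
      calc ∑ k ∈ Finset.univ.erase k₀, y k
          ≤ ∑ _k ∈ Finset.univ.erase k₀, a :=
            Finset.sum_le_sum fun k hk => hpair k₀ k (Finset.ne_of_mem_erase hk).symm hk₀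
        _ ≤ ∑ _k : ι, a := Finset.sum_le_univ_sum_of_nonneg fun _ => ha
        _ = Fintype.card ι * a := hsum_a
    rw [← Finset.add_sum_erase _ _ (Finset.mem_univ k₀)] at h
    linarith [hle_s k₀]
  · simp only [not_exists, not_lt] at hbig
    have : ∑ k, y k ≤ Fintype.card ι * a := hsum_a ▸ Finset.sum_le_sum fun k _ => hbig k
    linarith

theorem measureReal_lt_rpow_mul_of_pareto {Ω : Type*} [MeasurableSpace Ω] {P : Measure Ω}
    {X : Ω → ℝ} {γ b t : ℝ} (hγ : 0 < γ)
    (htail : ∀ x : ℝ, 1 ≤ x → P.real {ω | x < X ω} = x ^ (-γ)) (hb0 : 0 ≤ b) (hb1 : b ≤ 1)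
    (ht : 1 ≤ t) :
    P.real {ω | t < b ^ (1 / γ) * X ω} = b * t ^ (-γ) := by
  rcases hb0.eq_or_lt with rfl | hb
  · simp [Real.zero_rpow (inv_ne_zero hγ.ne'), (zero_le_one.trans ht).not_gt]
  have hc : 0 < b ^ (1 / γ) := Real.rpow_pos_of_pos hb _
  have hc1 : b ^ (1 / γ) ≤ 1 := Real.rpow_le_one hb0 hb1 (by positivity)
  have hset : {ω | t < b ^ (1 / γ) * X ω} = {ω | t / b ^ (1 / γ) < X ω} := by
    ext ω; exact (div_lt_iff₀' hc).symm
  have hcγ : (b ^ (1 / γ)) ^ (-γ) = b⁻¹ := by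
    rw [← Real.rpow_mul hb0, show 1 / γ * -γ = -1 by field_simp, Real.rpow_neg_one]
  rw [hset, htail _ ((one_le_div₀ hc).2 (hc1.trans ht)), Real.div_rpow (by linarith) hc.le, hcγ,
    div_inv_eq_mul, mul_comm]

section SumOfIndependentTails

variable {Ω ι : Type*} [MeasurableSpace Ω] {P : Measure Ω} [IsProbabilityMeasure P] [Fintype ι]
  {Y : ι → Ω → ℝ} {B : ι → ℝ} {γ : ℝ}

theorem rpow_neg_sub_sq_le_measureReal_lt_sum (hY : ∀ k, Measurable (Y k))
    (hindep : iIndepFun Y P) (hnonneg : ∀ᵐ ω ∂P, ∀ k, 0 ≤ Y k ω)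
    (htail : ∀ k t, 1 ≤ t → P.real {ω | t < Y k ω} = B k * t ^ (-γ)) (hB : ∑ k, B k = 1)
    {r : ℝ} (hr : 1 ≤ r) :
    r ^ (-γ) - (r ^ (-γ)) ^ 2 ≤ P.real {ω | r < ∑ k, Y k ω} := by
  set A := ⋂ k, Y k ⁻¹' Set.Iic r
  have hle : ∀ k, P.real (Y k ⁻¹' Set.Iic r) = 1 - B k * r ^ (-γ) := fun k => by
    rw [← htail k r hr, show {ω | r < Y k ω} = (Y k ⁻¹' Set.Iic r)ᶜ by ext; simp,
      probReal_compl_eq_one_sub (hY k measurableSet_Iic), sub_sub_cancel]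
  have hA : P.real A = ∏ k, (1 - B k * r ^ (-γ)) := by
    have h := hindep.measure_inter_preimage_eq_mul Finset.univ
      (sets := fun _ => Set.Iic r) fun _ _ => measurableSet_Iic
    simp only [Finset.mem_univ, Set.iInter_true] at h
    rw [measureReal_def, h, ENNReal.toReal_prod]
    exact Finset.prod_congr rfl fun k _ => hle k
  have hAc : P.real Aᶜ ≤ P.real {ω | r < ∑ k, Y k ω} := by
    refine ENNReal.toReal_mono (measure_ne_top P _) (measure_mono_ae ?_)
    filter_upwards [hnonneg] with ω hω (hωA : ω ∈ Aᶜ)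
    obtain ⟨k, hk⟩ : ∃ k, r < Y k ω := by simpa [A] using hωA
    exact hk.trans_le (Finset.single_le_sum (fun j _ => hω j) (Finset.mem_univ k))
  have hprod : ∏ k, (1 - B k * r ^ (-γ)) ≤ 1 - r ^ (-γ) + (r ^ (-γ)) ^ 2 := by
    have h := Finset.univ.prod_one_sub_le_one_sub_sum_add_sq (a := fun k => B k * r ^ (-γ))
      (fun k _ => htail k r hr ▸ measureReal_nonneg)
      (fun k _ => htail k r hr ▸ measureReal_le_one)
    rwa [← Finset.sum_mul, hB, one_mul] at h
  rw [probReal_compl_eq_one_sub (.iInter fun k => hY k measurableSet_Iic), hA] at hAc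
  linarith

theorem measureReal_lt_sum_le_rpow_add_sq (hindep : iIndepFun Y P)
    (htail : ∀ k t, 1 ≤ t → P.real {ω | t < Y k ω} = B k * t ^ (-γ)) (hB : ∑ k, B k = 1)
    {r s a : ℝ} (hs : 1 ≤ s) (ha : 1 ≤ a) (hr : s + Fintype.card ι * a ≤ r) :
    P.real {ω | r < ∑ k, Y k ω} ≤ s ^ (-γ) + (a ^ (-γ)) ^ 2 := by
  classical
  set pairs := Finset.univ.filter fun p : ι × ι => p.1 ≠ p.2
  set big : ι → Set Ω := fun k => {ω | a < Y k ω}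
  have hsub : {ω | r < ∑ k, Y k ω} ⊆
      (⋃ k, {ω | s < Y k ω}) ∪ ⋃ p ∈ pairs, big p.1 ∩ big p.2 := by
    intro ω hω
    rcases exists_lt_or_exists_ne_lt_of_lt_sum (by linarith) (by linarith) hr hω with
      ⟨k, hk⟩ | ⟨j, k, hjk, hj, hk⟩
    · exact Or.inl (Set.mem_iUnion.2 ⟨k, hk⟩)
    · exact Or.inr (Set.mem_biUnion (x := (j, k)) (by simp [pairs, hjk]) ⟨hj, hk⟩)
  have hsingle : P.real (⋃ k, {ω | s < Y k ω}) ≤ s ^ (-γ) :=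
    calc _ ≤ ∑ k, P.real {ω | s < Y k ω} := measureReal_iUnion_fintype_le _
      _ = s ^ (-γ) := by simp_rw [htail _ s hs, ← Finset.sum_mul, hB, one_mul]
  have hpair : ∀ p ∈ pairs,
      P.real (big p.1 ∩ big p.2) = P.real (big p.1) * P.real (big p.2) := by
    intro p hp
    have h := (hindep.indepFun (Finset.mem_filter.1 hp).2).measure_inter_preimage_eq_mul
      (Set.Ioi a) (Set.Ioi a) measurableSet_Ioi measurableSet_Ioi
    simp only [measureReal_def, ← ENNReal.toReal_mul]
    exact congrArg ENNReal.toReal h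
  have hdouble : P.real (⋃ p ∈ pairs, big p.1 ∩ big p.2) ≤ (a ^ (-γ)) ^ 2 :=
    calc _ ≤ ∑ p ∈ pairs, P.real (big p.1 ∩ big p.2) := measureReal_biUnion_finset_le _ _
      _ = ∑ p ∈ pairs, P.real (big p.1) * P.real (big p.2) := Finset.sum_congr rfl hpair
      _ ≤ ∑ p : ι × ι, P.real (big p.1) * P.real (big p.2) :=
        Finset.sum_le_univ_sum_of_nonneg fun _ =>
          mul_nonneg measureReal_nonneg measureReal_nonneg
      _ = (∑ k, P.real (big k)) ^ 2 := by
        rw [sq, Finset.sum_mul_sum]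
        exact Fintype.sum_prod_type' fun i j => P.real (big i) * P.real (big j)
      _ = (a ^ (-γ)) ^ 2 := by simp_rw [big, htail _ a ha, ← Finset.sum_mul, hB, one_mul]
  calc P.real {ω | r < ∑ k, Y k ω}
      ≤ P.real ((⋃ k, {ω | s < Y k ω}) ∪ ⋃ p ∈ pairs, big p.1 ∩ big p.2) :=
        measureReal_mono hsub
    _ ≤ _ := measureReal_union_le _ _
    _ ≤ _ := add_le_add hsingle hdouble

end SumOfIndependentTails

theorem tendsto_div_rpow_neg_of_le_of_le {f : ℝ → ℝ} {γ c : ℝ} (hγ : 0 < γ)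
    (hlower : ∀ r, 1 ≤ r → r ^ (-γ) - (r ^ (-γ)) ^ 2 ≤ f r)
    (hupper : ∀ r s a, 1 ≤ s → 1 ≤ a → s + c * a ≤ r → f r ≤ s ^ (-γ) + (a ^ (-γ)) ^ 2) :
    Tendsto (fun r : ℝ => f r / r ^ (-γ)) atTop (𝓝 1) := by
  set u : ℝ → ℝ := fun r => r ^ (-(1 / 4 : ℝ))
  have hu : Tendsto u atTop (𝓝 0) := tendsto_rpow_neg_atTop (by norm_num)
  have hru : Tendsto (fun r : ℝ => r * u r ^ 2) atTop atTop := by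
    refine (tendsto_rpow_atTop (by norm_num : (0 : ℝ) < 1 / 2)).congr' ?_
    filter_upwards [eventually_gt_atTop 0] with r hr
    rw [← Real.rpow_natCast, ← Real.rpow_mul hr.le, ← Real.rpow_one_add' hr.le (by norm_num)]
    norm_num
  have hcu : Tendsto (fun r : ℝ => 1 - c * u r) atTop (𝓝 1) := by
    simpa using (hu.const_mul c).const_sub 1
  have hlim_lower : Tendsto (fun r : ℝ => 1 - r ^ (-γ)) atTop (𝓝 1) := by
    simpa using (tendsto_rpow_neg_atTop hγ).const_sub 1
  have hlim_upper : Tendsto (fun r : ℝ => (1 - c * u r) ^ (-γ) + (r * u r ^ 2) ^ (-γ))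
      atTop (𝓝 1) := by
    have h1 := (Real.continuousAt_rpow_const 1 (-γ) (Or.inl one_ne_zero)).tendsto.comp hcu
    simpa using h1.add ((tendsto_rpow_neg_atTop hγ).comp hru)
  refine tendsto_of_tendsto_of_tendsto_of_le_of_le' hlim_lower hlim_upper ?_ ?_
  · filter_upwards [eventually_ge_atTop (1 : ℝ)] with r hr
    have hq : 0 < r ^ (-γ) := Real.rpow_pos_of_pos (by linarith) _
    rw [le_div_iff₀ hq]
    nlinarith [hlower r hr]
  · filter_upwards [eventually_ge_atTop (2 : ℝ),
      hcu.eventually (le_mem_nhds (by norm_num : (1 / 2 : ℝ) < 1)), hru.eventually_ge_atTop 1,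
      hu.eventually (ge_mem_nhds (by norm_num : (0 : ℝ) < 1)), eventually_gt_atTop 0]
      with r hr hcu_half hru1 hu1 hr0
    have hu0 : 0 ≤ u r := Real.rpow_nonneg hr0.le _
    have hs : 1 ≤ r * (1 - c * u r) := by nlinarith
    have ha : 1 ≤ r * u r := by nlinarith
    have h := hupper r _ _ hs ha (le_of_eq (by ring))
    rw [div_le_iff₀ (Real.rpow_pos_of_pos hr0 _)]
    calc f r ≤ (r * (1 - c * u r)) ^ (-γ) + ((r * u r) ^ (-γ)) ^ 2 := h
      _ = _ := by
        rw [Real.mul_rpow hr0.le (by linarith), Real.mul_rpow hr0.le hu0,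
          Real.mul_rpow hr0.le (by positivity), sq (u r), Real.mul_rpow hu0 hu0]
        ring

theorem lowrank_scale_tail_pareto_general
    {Ω : Type*} [MeasurableSpace Ω] (P : Measure Ω) [IsProbabilityMeasure P]
    (K : ℕ) (γ : ℝ) (hγ : 0 < γ) (X : Fin K → Ω → ℝ)
    (hmeas : ∀ k, Measurable (X k))
    (hindep : iIndepFun X P)
    (htail : ∀ k, ∀ x : ℝ, 1 ≤ x → (P {ω | x < X k ω}).toReal = x ^ (-γ))
    (B : Fin K → ℝ) (hB : ∀ k, 0 ≤ B k) (hBsum : ∑ k, B k = 1)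
    (R : Ω → ℝ) (hR : ∀ ω, R ω = ∑ k, (B k) ^ (1 / γ) * X k ω) :
    Tendsto (fun r : ℝ => (P {ω | r < R ω}).toReal / r ^ (-γ))
      atTop (nhds 1) := by
  set Y : Fin K → Ω → ℝ := fun k ω => B k ^ (1 / γ) * X k ω
  have hY : ∀ k, Measurable (Y k) := fun k => (hmeas k).const_mul _
  have hYindep : iIndepFun Y P :=
    hindep.comp (fun k x => B k ^ (1 / γ) * x) fun k => measurable_id.const_mul _
  have hYtail : ∀ k t, 1 ≤ t → P.real {ω | t < Y k ω} = B k * t ^ (-γ) := fun k _ ht =>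
    measureReal_lt_rpow_mul_of_pareto hγ (htail k) (hB k)
      (hBsum ▸ Finset.single_le_sum (fun j _ => hB j) (Finset.mem_univ k)) ht
  have hYnonneg : ∀ᵐ ω ∂P, ∀ k, 0 ≤ Y k ω := by
    refine ae_all_iff.2 fun k => ?_
    have hX1 : P {ω | 1 < X k ω} = 1 := by
      rw [← ENNReal.toReal_eq_one_iff, htail k 1 le_rfl, Real.one_rpow]
    filter_upwards [(mem_ae_iff_prob_eq_one (measurableSet_lt measurable_const (hmeas k))).2 hX1]
      with ω hω
    exact mul_nonneg (Real.rpow_nonneg (hB k) _) (zero_le_one.trans hω.le)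
  simp_rw [hR]
  exact tendsto_div_rpow_neg_of_le_of_le hγ
    (fun r hr => rpow_neg_sub_sq_le_measureReal_lt_sum hY hYindep hYnonneg hYtail hBsum hr)
    fun r s a hs ha hr => measureReal_lt_sum_le_rpow_add_sq hYindep hYtail hBsum hs ha hr

/-- (β = 0 case of Proposition 1.) If `X 1, …, X K` are independent
Pareto(γ) random variables (γ > 0) and `B 1, …, B K ≥ 0` sum to one, then
`R = ∑ k, (B k)^(1/γ) * X k` satisfies `P(R > r) / r^(-γ) → 1` as `r → ∞`. -/
theorem lowrank_scale_tail_pareto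
    {Ω : Type*} [MeasurableSpace Ω] (P : Measure Ω) [IsProbabilityMeasure P]
    (K : ℕ) (γ : ℝ) (hγ : 0 < γ) (X : Fin K → Ω → ℝ)
    (hmeas : ∀ k, Measurable (X k))
    (hindep : iIndepFun X P)
    (htail : ∀ k, ∀ x : ℝ, 1 ≤ x → (P {ω | x < X k ω}).toReal = x ^ (-γ))
    (hlow : ∀ k, ∀ x : ℝ, x < 1 → (P {ω | x < X k ω}).toReal = 1)
    (B : Fin K → ℝ) (hB : ∀ k, 0 ≤ B k) (hBsum : ∑ k, B k = 1)
    (R : Ω → ℝ) (hR : ∀ ω, R ω = ∑ k, (B k) ^ (1 / γ) * X k ω) :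
    Tendsto (fun r : ℝ => (P {ω | r < R ω}).toReal / r ^ (-γ))
      atTop (nhds 1) :=
  lowrank_scale_tail_pareto_general P K γ hγ X hmeas hindep htail B hB hBsum R hR
end

section
/- Let X_1, …, X_K be independent Pareto(γ) random variables, γ > 0, and let a_1, …, a_K ≥ 0 and b_1, …, b_K ≥ 0 be weight vectors, not both identically zero. Then lim_{r→∞} r^γ · P(Σ_{k=1}^K a_k X_k > r and Σ_{k=1}^K b_k X_k > r) = Σ_{k=1}^K min(a_k, b_k)^γ. -/
/-!
Write `c k = min (a k) (b k)`. Two of the `X k` exceed a level `t` only with probability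
`O(t ^ (-2γ))`, which is negligible against `r ^ (-γ)` when `t` is of order `r`. When a single
`X k` is large, both weighted sums exceed `r` essentially iff `c k * X k` does, and
`P(c k * X k > r) = c k ^ γ * r ^ (-γ)`.

For the lower bound, the events `{c k * X k > r}` lie (almost surely, as `X j ≥ 1`) inside the
joint event, and the second Bonferroni inequality bounds the probability of their union from below
by the sum of their probabilities minus pairwise overlaps. For the upper bound, with
`D ≥ ∑ a, ∑ b`, outside the events where two `X j` exceed `ε r` the joint event forces
`c k * X k > (1 - D ε) r` for some `k`; then let `1 - D ε` tend to `1`.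
-/

open MeasureTheory ProbabilityTheory Filter Finset Topology

theorem tendsto_rpow_mul_of_forall_eventually_le {f : ℝ → ℝ} {S γ : ℝ} (hγ : 0 < γ)
    (hlow : ∃ C, ∀ᶠ r in atTop, S * r ^ (-γ) ≤ f r + C * (r ^ (-γ)) ^ 2)
    (hup : ∀ u ∈ Set.Ioo (0 : ℝ) 1, ∃ C, ∀ᶠ r in atTop,
      f r ≤ u ^ (-γ) * S * r ^ (-γ) + C * (r ^ (-γ)) ^ 2) :
    Tendsto (fun r => r ^ γ * f r) atTop (𝓝 S) := by
  have hinv : ∀ᶠ r : ℝ in atTop, r ^ γ * r ^ (-γ) = 1 := by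
    filter_upwards [eventually_gt_atTop 0] with r hr
    rw [Real.rpow_neg hr.le, mul_inv_cancel₀ (Real.rpow_pos_of_pos hr γ).ne']
  have hsmall : ∀ C ε : ℝ, 0 < ε → ∀ᶠ r : ℝ in atTop, C * r ^ (-γ) < ε := fun C ε hε => by
    simpa using ((tendsto_rpow_neg_atTop hγ).const_mul C).eventually (gt_mem_nhds (by simpa))
  refine tendsto_order.2 ⟨fun y hy => ?_, fun y hy => ?_⟩
  · obtain ⟨C, hC⟩ := hlow
    filter_upwards [hC, hinv, hsmall C (S - y) (by linarith), eventually_gt_atTop 0]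
      with r hr hpq hCr hr0
    linear_combination hCr + mul_le_mul_of_nonneg_left hr (Real.rpow_nonneg hr0.le γ) +
      (C * r ^ (-γ) - S) * hpq
  · have hcont : Tendsto (fun u : ℝ => u ^ (-γ) * S) (𝓝[<] 1) (𝓝 S) := by
      simpa using ((Real.continuousAt_rpow_const 1 (-γ) (Or.inl one_ne_zero)).tendsto.mul_const
        S).mono_left nhdsWithin_le_nhds
    obtain ⟨u, huy, hu⟩ :=
      ((hcont.eventually (gt_mem_nhds hy)).and (Ioo_mem_nhdsLT zero_lt_one)).exists
    obtain ⟨C, hC⟩ := hup u hu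
    filter_upwards [hC, hinv, hsmall C (y - u ^ (-γ) * S) (by linarith), eventually_gt_atTop 0]
      with r hr hpq hCr hr0
    linear_combination hCr + mul_le_mul_of_nonneg_left hr (Real.rpow_nonneg hr0.le γ) +
      (u ^ (-γ) * S + C * r ^ (-γ)) * hpq

section WeightedSums

variable {ι : Type*} [Fintype ι] {a b x : ι → ℝ} {t : ℝ}

theorem sum_mul_le_mul_add_sum_mul (ha : ∀ j, 0 ≤ a j) (ht : 0 ≤ t) {k : ι}
    (hx : ∀ j ≠ k, x j ≤ t) :
    ∑ j, a j * x j ≤ a k * x k + (∑ j, a j) * t := by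
  classical
  rw [← add_sum_erase _ _ (mem_univ k)]
  gcongr
  calc ∑ j ∈ univ.erase k, a j * x j ≤ ∑ j ∈ univ.erase k, a j * t :=
        sum_le_sum fun j hj => mul_le_mul_of_nonneg_left (hx j (ne_of_mem_erase hj)) (ha j)
    _ ≤ (∑ j, a j) * t := by
        rw [← sum_mul]
        exact mul_le_mul_of_nonneg_right (sum_le_sum_of_subset_of_nonneg (subset_univ _)
          fun j _ _ => ha j) ht

theorem exists_lt_min_mul_or_exists_two_lt (ha : ∀ j, 0 ≤ a j)
    (hb : ∀ j, 0 ≤ b j) {D r : ℝ} (hDa : ∑ j, a j ≤ D) (hDb : ∑ j, b j ≤ D) (ht : 0 ≤ t)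
    (hr : D * t ≤ r) (hxa : r < ∑ j, a j * x j) (hxb : r < ∑ j, b j * x j) :
    (∃ k, r - D * t < min (a k) (b k) * x k) ∨ ∃ j k, j ≠ k ∧ t < x j ∧ t < x k := by
  by_cases htwo : ∃ j k, j ≠ k ∧ t < x j ∧ t < x k
  · exact Or.inr htwo
  push Not at htwo
  have hDta := mul_le_mul_of_nonneg_right hDa ht
  have hDtb := mul_le_mul_of_nonneg_right hDb ht
  obtain ⟨k, hk⟩ : ∃ k, t < x k := by
    by_contra! hall
    have : ∑ j, a j * x j ≤ (∑ j, a j) * t := by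
      rw [sum_mul]
      exact sum_le_sum fun j _ => mul_le_mul_of_nonneg_left (hall j) (ha j)
    linarith
  have hsmall : ∀ j ≠ k, x j ≤ t := fun j hj => htwo k j (Ne.symm hj) hk
  have hsa := sum_mul_le_mul_add_sum_mul ha ht hsmall
  have hsb := sum_mul_le_mul_add_sum_mul hb ht hsmall
  refine Or.inl ⟨k, ?_⟩
  rcases min_choice (a k) (b k) with h | h <;> rw [h] <;> linarith

end WeightedSums

namespace MeasureTheory

variable {Ω ι : Type*} [MeasurableSpace Ω]

theorem sum_measureReal_le_measureReal_biUnion_add_sum_inter (μ : Measure Ω) [IsFiniteMeasure μ]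
    [DecidableEq ι] {A : ι → Set Ω} (hA : ∀ i, MeasurableSet (A i)) (s : Finset ι) :
    ∑ k ∈ s, μ.real (A k) ≤
      μ.real (⋃ k ∈ s, A k) + ∑ j ∈ s, ∑ k ∈ s.erase j, μ.real (A j ∩ A k) := by
  induction s using Finset.induction_on with
  | empty => simp
  | insert i s hi ih =>
    have hunion : μ.real (A i) + μ.real (⋃ k ∈ s, A k) =
        μ.real (⋃ k ∈ insert i s, A k) + μ.real (A i ∩ ⋃ k ∈ s, A k) := by
      rw [Finset.set_biUnion_insert,
        measureReal_union_add_inter (s.measurableSet_biUnion fun k _ => hA k) (measure_ne_top _ _)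
          (measure_ne_top _ _)]
    have hinter : μ.real (A i ∩ ⋃ k ∈ s, A k) ≤ ∑ k ∈ s, μ.real (A i ∩ A k) := by
      rw [Set.inter_iUnion₂]
      exact measureReal_biUnion_finset_le s _
    have hpairs : ∑ k ∈ s, μ.real (A i ∩ A k) + ∑ j ∈ s, ∑ k ∈ s.erase j, μ.real (A j ∩ A k) ≤
        ∑ j ∈ insert i s, ∑ k ∈ (insert i s).erase j, μ.real (A j ∩ A k) := by
      rw [Finset.sum_insert hi, Finset.erase_insert hi]
      gcongr
      exact Finset.subset_insert i s
    rw [Finset.sum_insert hi]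
    linarith

end MeasureTheory

namespace ProbabilityTheory

variable {Ω ι : Type*} [MeasurableSpace Ω] {P : Measure Ω} {γ : ℝ}

def HasParetoTail (P : Measure Ω) (γ : ℝ) (Y : Ω → ℝ) : Prop :=
  ∀ x : ℝ, 1 ≤ x → P.real {ω | x < Y ω} = x ^ (-γ)

namespace HasParetoTail

variable {Y Z : Ω → ℝ}

theorem ae_one_lt [IsProbabilityMeasure P] (hY : HasParetoTail P γ Y) (hm : Measurable Y) :
    ∀ᵐ ω ∂P, 1 < Y ω := by
  refine (mem_ae_iff_prob_eq_one (measurableSet_lt measurable_const hm)).2 ?_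
  have h := hY 1 le_rfl
  rwa [Real.one_rpow, measureReal_def, ENNReal.toReal_eq_one_iff] at h

theorem measureReal_lt_const_mul (hY : HasParetoTail P γ Y) (hγ : 0 < γ) {w s : ℝ}
    (hw : 0 ≤ w) (hs : 0 < s) (hws : w ≤ s) :
    P.real {ω | s < w * Y ω} = w ^ γ * s ^ (-γ) := by
  rcases hw.eq_or_lt with rfl | hw
  · simp [hs.not_gt, Real.zero_rpow hγ.ne']
  have hset : {ω | s < w * Y ω} = {ω | s / w < Y ω} := by
    ext ω
    simp only [Set.mem_ofPred_eq, div_lt_iff₀' hw]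
  rw [hset, hY _ ((one_le_div hw).2 hws), Real.div_rpow hs.le hw.le, Real.rpow_neg hw.le,
    div_inv_eq_mul, mul_comm]

theorem measureReal_inter_of_indepFun (hY : HasParetoTail P γ Y) (hZ : HasParetoTail P γ Z)
    (hYZ : IndepFun Y Z P) {t : ℝ} (ht : 1 ≤ t) :
    P.real ({ω | t < Y ω} ∩ {ω | t < Z ω}) = (t ^ (-γ)) ^ 2 := by
  have h := congrArg ENNReal.toReal
    (hYZ.measure_inter_preimage_eq_mul (Set.Ioi t) (Set.Ioi t) measurableSet_Ioi measurableSet_Ioi)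
  rw [ENNReal.toReal_mul] at h
  calc _ = P.real {ω | t < Y ω} * P.real {ω | t < Z ω} := h
    _ = (t ^ (-γ)) ^ 2 := by rw [hY t ht, hZ t ht, sq]

end HasParetoTail

theorem sum_sum_erase_measureReal_inter_le [Fintype ι] [DecidableEq ι] {X : ι → Ω → ℝ}
    (hX : ∀ k, HasParetoTail P γ (X k)) (hind : iIndepFun X P) {t : ℝ} (ht : 1 ≤ t) :
    ∑ j, ∑ k ∈ univ.erase j, P.real ({ω | t < X j ω} ∩ {ω | t < X k ω}) ≤
      Fintype.card ι ^ 2 * (t ^ (-γ)) ^ 2 := by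
  calc ∑ j, ∑ k ∈ univ.erase j, P.real ({ω | t < X j ω} ∩ {ω | t < X k ω})
      = ∑ j, ∑ k ∈ univ.erase j, (t ^ (-γ)) ^ 2 :=
        sum_congr rfl fun j _ => sum_congr rfl fun k hk =>
          (hX j).measureReal_inter_of_indepFun (hX k)
            (hind.indepFun (ne_of_mem_erase hk).symm) ht
    _ ≤ ∑ _j : ι, ∑ _k : ι, (t ^ (-γ)) ^ 2 := by
        gcongr
        exact subset_univ _
    _ = Fintype.card ι ^ 2 * (t ^ (-γ)) ^ 2 := by simp [sq, mul_assoc]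

section JointTail

variable [Fintype ι] [IsProbabilityMeasure P] {X : ι → Ω → ℝ} {a b : ι → ℝ}

theorem le_measureReal_jointTail (hγ : 0 < γ) (hX : ∀ k, HasParetoTail P γ (X k))
    (hmeas : ∀ k, Measurable (X k)) (hind : iIndepFun X P) (ha : ∀ k, 0 ≤ a k)
    (hb : ∀ k, 0 ≤ b k) {D r : ℝ} (hD : 0 < D) (hDa : ∑ k, a k ≤ D) (hDr : D ≤ r) :
    (∑ k, min (a k) (b k) ^ γ) * r ^ (-γ) ≤
      P.real {ω | r < ∑ k, a k * X k ω ∧ r < ∑ k, b k * X k ω} +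
        Fintype.card ι ^ 2 * ((r / D) ^ (-γ)) ^ 2 := by
  classical
  set c : ι → ℝ := fun k => min (a k) (b k)
  have hr : 0 < r := hD.trans_le hDr
  have hc0 : ∀ k, 0 ≤ c k := fun k => le_min (ha k) (hb k)
  have hcD : ∀ k, c k ≤ D := fun k =>
    (min_le_left _ _).trans ((single_le_sum (fun j _ => ha j) (mem_univ k)).trans hDa)
  set G : ι → Set Ω := fun k => {ω | r < c k * X k ω}
  have hG : ∀ k, MeasurableSet (G k) := fun k =>
    measurableSet_lt measurable_const ((hmeas k).const_mul _)
  have hGE : (⋃ k ∈ univ, G k) ≤ᵐ[P] {ω | r < ∑ k, a k * X k ω ∧ r < ∑ k, b k * X k ω} := by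
    filter_upwards [ae_all_iff.2 fun k => (hX k).ae_one_lt (hmeas k)] with ω hω hmem
    obtain ⟨k, -, hk⟩ := Set.mem_iUnion₂.1 hmem
    have hx : ∀ j, 0 ≤ X j ω := fun j => zero_le_one.trans (hω j).le
    have hsa := single_le_sum (fun j _ => mul_nonneg (ha j) (hx j)) (mem_univ k)
    have hsb := single_le_sum (fun j _ => mul_nonneg (hb j) (hx j)) (mem_univ k)
    exact ⟨hk.trans_le ((mul_le_mul_of_nonneg_right (min_le_left _ _) (hx k)).trans hsa),
      hk.trans_le ((mul_le_mul_of_nonneg_right (min_le_right _ _) (hx k)).trans hsb)⟩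
  have hGT : ∀ k, G k ⊆ {ω | r / D < X k ω} := fun k ω (hω : r < c k * X k ω) => by
    have hX0 : 0 < X k ω := by nlinarith [hc0 k]
    rw [Set.mem_ofPred_eq, div_lt_iff₀' hD]
    nlinarith [mul_le_mul_of_nonneg_right (hcD k) hX0.le]
  calc (∑ k, c k ^ γ) * r ^ (-γ) = ∑ k, P.real (G k) := by
        rw [sum_mul]
        exact sum_congr rfl fun k _ =>
          ((hX k).measureReal_lt_const_mul hγ (hc0 k) hr ((hcD k).trans hDr)).symm
    _ ≤ P.real (⋃ k ∈ univ, G k) + ∑ j, ∑ k ∈ univ.erase j, P.real (G j ∩ G k) :=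
        sum_measureReal_le_measureReal_biUnion_add_sum_inter P hG univ
    _ ≤ P.real {ω | r < ∑ k, a k * X k ω ∧ r < ∑ k, b k * X k ω} +
          ∑ j, ∑ k ∈ univ.erase j, P.real ({ω | r / D < X j ω} ∩ {ω | r / D < X k ω}) :=
        add_le_add (ENNReal.toReal_mono (measure_ne_top _ _) (measure_mono_ae hGE))
          (sum_le_sum fun j _ => sum_le_sum fun k _ =>
            measureReal_mono (Set.inter_subset_inter (hGT j) (hGT k)))
    _ ≤ _ := add_le_add le_rfl (sum_sum_erase_measureReal_inter_le hX hind ((one_le_div hD).2 hDr))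

theorem measureReal_jointTail_le (hγ : 0 < γ) (hX : ∀ k, HasParetoTail P γ (X k))
    (hind : iIndepFun X P) (ha : ∀ k, 0 ≤ a k) (hb : ∀ k, 0 ≤ b k) {D t r : ℝ} (hD : 0 < D)
    (hDa : ∑ k, a k ≤ D) (hDb : ∑ k, b k ≤ D) (ht : 1 ≤ t) (hDr : D ≤ r - D * t) :
    P.real {ω | r < ∑ k, a k * X k ω ∧ r < ∑ k, b k * X k ω} ≤
      (∑ k, min (a k) (b k) ^ γ) * (r - D * t) ^ (-γ) +
        Fintype.card ι ^ 2 * (t ^ (-γ)) ^ 2 := by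
  classical
  set c : ι → ℝ := fun k => min (a k) (b k)
  set T : ι → Set Ω := fun k => {ω | t < X k ω}
  have hcs : ∀ k, c k ≤ r - D * t := fun k =>
    ((min_le_left _ _).trans ((single_le_sum (fun j _ => ha j) (mem_univ k)).trans hDa)).trans hDr
  have hsub : {ω | r < ∑ k, a k * X k ω ∧ r < ∑ k, b k * X k ω} ⊆
      (⋃ k ∈ univ, {ω | r - D * t < c k * X k ω}) ∪ ⋃ j ∈ univ, ⋃ k ∈ univ.erase j, T j ∩ T k := by
    rintro ω ⟨hωa, hωb⟩
    rcases exists_lt_min_mul_or_exists_two_lt (t := t) ha hb hDa hDb (by linarith) (by linarith)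
      hωa hωb with ⟨k, hk⟩ | ⟨j, k, hjk, hj, hk⟩
    · exact Or.inl (Set.mem_biUnion (mem_univ k) hk)
    · exact Or.inr (Set.mem_biUnion (mem_univ j)
        (Set.mem_biUnion (mem_erase.2 ⟨hjk.symm, mem_univ k⟩) ⟨hj, hk⟩))
  calc P.real {ω | r < ∑ k, a k * X k ω ∧ r < ∑ k, b k * X k ω}
      ≤ P.real (⋃ k ∈ univ, {ω | r - D * t < c k * X k ω}) +
          P.real (⋃ j ∈ univ, ⋃ k ∈ univ.erase j, T j ∩ T k) :=
        (measureReal_mono hsub).trans (measureReal_union_le _ _)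
    _ ≤ ∑ k, P.real {ω | r - D * t < c k * X k ω} + ∑ j, ∑ k ∈ univ.erase j, P.real (T j ∩ T k) :=
        add_le_add (measureReal_biUnion_finset_le _ _) ((measureReal_biUnion_finset_le _ _).trans
          (sum_le_sum fun j _ => measureReal_biUnion_finset_le _ _))
    _ ≤ _ := by
        refine add_le_add (le_of_eq ?_) (sum_sum_erase_measureReal_inter_le hX hind ht)
        rw [sum_mul]
        exact sum_congr rfl fun k _ => (hX k).measureReal_lt_const_mul hγ
          (le_min (ha k) (hb k)) (hD.trans_le hDr) (hcs k)

theorem eventually_le_measureReal_jointTail (hγ : 0 < γ) (hX : ∀ k, HasParetoTail P γ (X k))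
    (hmeas : ∀ k, Measurable (X k)) (hind : iIndepFun X P) (ha : ∀ k, 0 ≤ a k)
    (hb : ∀ k, 0 ≤ b k) {D : ℝ} (hD : 0 < D) (hDa : ∑ k, a k ≤ D) :
    ∀ᶠ r in atTop, (∑ k, min (a k) (b k) ^ γ) * r ^ (-γ) ≤
      P.real {ω | r < ∑ k, a k * X k ω ∧ r < ∑ k, b k * X k ω} +
        Fintype.card ι ^ 2 * (D ^ γ) ^ 2 * (r ^ (-γ)) ^ 2 := by
  filter_upwards [eventually_ge_atTop D] with r hr
  refine (le_measureReal_jointTail hγ hX hmeas hind ha hb hD hDa hr).trans_eq ?_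
  rw [Real.div_rpow (hD.le.trans hr) hD.le, Real.rpow_neg hD.le, div_inv_eq_mul]
  ring

theorem eventually_measureReal_jointTail_le (hγ : 0 < γ) (hX : ∀ k, HasParetoTail P γ (X k))
    (hind : iIndepFun X P) (ha : ∀ k, 0 ≤ a k) (hb : ∀ k, 0 ≤ b k) {D : ℝ} (hD : 0 < D)
    (hDa : ∑ k, a k ≤ D) (hDb : ∑ k, b k ≤ D) {u : ℝ} (hu : u ∈ Set.Ioo 0 1) :
    ∀ᶠ r in atTop, P.real {ω | r < ∑ k, a k * X k ω ∧ r < ∑ k, b k * X k ω} ≤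
      u ^ (-γ) * (∑ k, min (a k) (b k) ^ γ) * r ^ (-γ) +
        Fintype.card ι ^ 2 * (((1 - u) / D) ^ (-γ)) ^ 2 * (r ^ (-γ)) ^ 2 := by
  set ε := (1 - u) / D
  have hε : 0 < ε := div_pos (sub_pos.2 hu.2) hD
  filter_upwards [eventually_ge_atTop (1 / ε), eventually_ge_atTop (D / u)] with r hrε hru
  have hr : 0 < r := (one_div_pos.2 hε).trans_le hrε
  have hs : r - D * (ε * r) = u * r := by rw [← mul_assoc, mul_div_cancel₀ _ hD.ne']; ring
  have ht : 1 ≤ ε * r := by rwa [div_le_iff₀' hε] at hrε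
  have hDr : D ≤ r - D * (ε * r) := by rwa [hs, ← div_le_iff₀' hu.1]
  refine (measureReal_jointTail_le hγ hX hind ha hb hD hDa hDb ht hDr).trans_eq ?_
  rw [hs, Real.mul_rpow hu.1.le hr.le, Real.mul_rpow hε.le hr.le]
  ring

end JointTail

end ProbabilityTheory

theorem joint_tail_weighted_sums_pareto_general
    {Ω : Type*} [MeasurableSpace Ω] (P : Measure Ω) [IsProbabilityMeasure P]
    (K : ℕ) (γ : ℝ) (hγ : 0 < γ) (X : Fin K → Ω → ℝ)
    (hmeas : ∀ k, Measurable (X k))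
    (hindep : iIndepFun X P)
    (htail : ∀ k, ∀ x : ℝ, 1 ≤ x → (P {ω | x < X k ω}).toReal = x ^ (-γ))
    (a b : Fin K → ℝ) (ha : ∀ k, 0 ≤ a k) (hb : ∀ k, 0 ≤ b k) :
    Tendsto (fun r : ℝ =>
        r ^ γ * (P {ω | r < ∑ k, a k * X k ω ∧ r < ∑ k, b k * X k ω}).toReal)
      atTop (nhds (∑ k, min (a k) (b k) ^ γ)) := by
  set D := ∑ k, a k + ∑ k, b k + 1
  have ha0 : 0 ≤ ∑ k, a k := sum_nonneg fun k _ => ha k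
  have hb0 : 0 ≤ ∑ k, b k := sum_nonneg fun k _ => hb k
  have hD : 0 < D := by linarith
  have hDa : ∑ k, a k ≤ D := by linarith
  have hDb : ∑ k, b k ≤ D := by linarith
  exact tendsto_rpow_mul_of_forall_eventually_le hγ
    ⟨_, eventually_le_measureReal_jointTail hγ htail hmeas hindep ha hb hD hDa⟩
    fun u hu => ⟨_, eventually_measureReal_jointTail_le hγ htail hindep ha hb hD hDa hDb hu⟩

/-- (Key lemma in the proof of Proposition 2.) If `X 1, …, X K` are
independent Pareto(γ) random variables (γ > 0) and `a`, `b` are nonnegative weight vectors,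
not both identically zero, then
`r^γ · P(∑ k, a k * X k > r and ∑ k, b k * X k > r) → ∑ k, min (a k) (b k) ^ γ` as `r → ∞`. -/
theorem joint_tail_weighted_sums_pareto
    {Ω : Type*} [MeasurableSpace Ω] (P : Measure Ω) [IsProbabilityMeasure P]
    (K : ℕ) (γ : ℝ) (hγ : 0 < γ) (X : Fin K → Ω → ℝ)
    (hmeas : ∀ k, Measurable (X k))
    (hindep : iIndepFun X P)
    (htail : ∀ k, ∀ x : ℝ, 1 ≤ x → (P {ω | x < X k ω}).toReal = x ^ (-γ))
    (hlow : ∀ k, ∀ x : ℝ, x < 1 → (P {ω | x < X k ω}).toReal = 1)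
    (a b : Fin K → ℝ) (ha : ∀ k, 0 ≤ a k) (hb : ∀ k, 0 ≤ b k)
    (hne : (∃ k, a k ≠ 0) ∨ (∃ k, b k ≠ 0)) :
    Tendsto (fun r : ℝ =>
        r ^ γ * (P {ω | r < ∑ k, a k * X k ω ∧ r < ∑ k, b k * X k ω}).toReal)
      atTop (nhds (∑ k, min (a k) (b k) ^ γ)) :=
  joint_tail_weighted_sums_pareto_general P K γ hγ X hmeas hindep htail a b ha hb
end

section
/- Let X_1, …, X_K be independent Pareto(γ) random variables, γ > 0, and let B_{1,1}, …, B_{1,K} ≥ 0 and B_{2,1}, …, B_{2,K} ≥ 0 satisfy Σ_{k=1}^K B_{1,k} = Σ_{k=1}^K B_{2,k} = 1. Define R_1 = Σ_{k=1}^K B_{1,k}^{1/γ} X_k and R_2 = Σ_{k=1}^K B_{2,k}^{1/γ} X_k. Then the tail-correlation coefficient of (R_1, R_2) satisfies lim_{r→∞} P(R_1 > r and R_2 > r) / P(R_2 > r) = Σ_{k=1}^K min(B_{1,k}, B_{2,k}). -/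
/-!
Single big jump. Write `b k = min (B₁ k) (B₂ k)`. Since every `X k > 1` a.s., the event that one
term `b k ^ (1/γ) * X k` alone exceeds `r` forces both sums above `r`; by independence it has
probability `1 - ∏ k, (1 - b k * r ^ (-γ)) ∼ (∑ k, b k) * r ^ (-γ)`. Conversely, with
`m = r ^ (3/4)`, either two of the `X k` exceed `m`, at a cost `O(m ^ (-2γ)) = o(r ^ (-γ))`, or a
single `X k` carries both sums above `r - K * m`, at a cost `(∑ k, b k) * (r - K * m) ^ (-γ)`.
Hence `r ^ γ * P(R₁ > r, R₂ > r) → ∑ k, b k`, and the case `B₁ = B₂` normalizes the denominator.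
-/

open MeasureTheory ProbabilityTheory Filter Topology

lemma Real.min_rpow {x y z : ℝ} (hx : 0 ≤ x) (hy : 0 ≤ y) (hz : 0 ≤ z) :
    min x y ^ z = min (x ^ z) (y ^ z) := by
  rcases le_total x y with h | h
  · rw [min_eq_left h, min_eq_left (Real.rpow_le_rpow hx h hz)]
  · rw [min_eq_right h, min_eq_right (Real.rpow_le_rpow hy h hz)]

lemma ProbabilityTheory.iIndepFun.measureReal_iUnion_preimage
    {Ω ι β : Type*} [MeasurableSpace Ω] {P : Measure Ω} [IsProbabilityMeasure P] [Fintype ι]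
    [MeasurableSpace β] {X : ι → Ω → β} (hindep : iIndepFun X P) (hX : ∀ k, Measurable (X k))
    {S : ι → Set β} (hS : ∀ k, MeasurableSet (S k)) :
    P.real (⋃ k, X k ⁻¹' S k) = 1 - ∏ k, (1 - P.real (X k ⁻¹' S k)) := by
  have hA : ∀ k, MeasurableSet (X k ⁻¹' S k) := fun k => hX k (hS k)
  have hinter : P.real (⋂ k, (X k ⁻¹' S k)ᶜ) = ∏ k, P.real (X k ⁻¹' S k)ᶜ := by
    rw [measureReal_def, hindep.meas_iInter (s := fun k => (X k ⁻¹' S k)ᶜ)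
      fun k => ⟨(S k)ᶜ, (hS k).compl, rfl⟩, ENNReal.toReal_prod]
    rfl
  rw [← compl_compl (⋃ k, X k ⁻¹' S k), probReal_compl_eq_one_sub (MeasurableSet.iUnion hA).compl,
    Set.compl_iUnion, hinter]
  simp only [probReal_compl_eq_one_sub (hA _)]

section Pareto

variable {Ω : Type*} [MeasurableSpace Ω] {P : Measure Ω} {X : Ω → ℝ} {γ : ℝ}

lemma ae_one_lt_of_tail [IsProbabilityMeasure P] (hX : Measurable X)
    (htail : ∀ x : ℝ, 1 ≤ x → P.real {ω | x < X ω} = x ^ (-γ)) : ∀ᵐ ω ∂P, 1 < X ω := by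
  refine (mem_ae_iff_prob_eq_one (measurableSet_lt measurable_const hX)).2 ?_
  rw [← ENNReal.toReal_eq_one_iff]
  exact (htail 1 le_rfl).trans (Real.one_rpow _)

lemma measureReal_lt_rpow_mul_of_tail (hγ : 0 < γ)
    (htail : ∀ x : ℝ, 1 ≤ x → P.real {ω | x < X ω} = x ^ (-γ))
    {B r : ℝ} (hB0 : 0 ≤ B) (hB1 : B ≤ 1) (hr : 1 ≤ r) :
    P.real {ω | r < B ^ (1 / γ) * X ω} = B * r ^ (-γ) := by
  rcases hB0.eq_or_lt with rfl | hBpos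
  · have hempty : {ω | r < (0 : ℝ) * X ω} = ∅ := by
      ext ω
      simp only [zero_mul, Set.mem_ofPred_eq, Set.mem_empty_iff_false, iff_false, not_lt]
      linarith
    rw [Real.zero_rpow (one_div_pos.2 hγ).ne', hempty, measureReal_empty, zero_mul]
  · set c := B ^ (1 / γ)
    have hc : 0 < c := Real.rpow_pos_of_pos hBpos _
    have hcγ : c ^ γ = B := by
      rw [← Real.rpow_mul hB0, one_div_mul_cancel hγ.ne', Real.rpow_one]
    have hc1 : c ≤ 1 := Real.rpow_le_one hB0 hB1 (one_div_pos.2 hγ).le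
    have hset : {ω | r < c * X ω} = {ω | r / c < X ω} := by
      ext ω
      simp only [Set.mem_ofPred_eq, div_lt_iff₀ hc, mul_comm]
    rw [hset, htail _ ((one_le_div hc).2 (hc1.trans hr)), Real.div_rpow (by linarith) hc.le,
      Real.rpow_neg hc.le, hcγ]
    field_simp

end Pareto

section Deterministic

lemma exists_pair_lt_or_exists_forall_ne_le {ι : Type*} [Nonempty ι] (x : ι → ℝ) (m : ℝ) :
    (∃ j k, j ≠ k ∧ m < x j ∧ m < x k) ∨ ∃ k, ∀ j ≠ k, x j ≤ m := by
  by_contra! h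
  obtain ⟨hpair, hbig⟩ := h
  obtain ⟨j, -, hj⟩ := hbig (Classical.arbitrary ι)
  obtain ⟨k, hkj, hk⟩ := hbig j
  exact (hpair j k hkj.symm hj).not_gt hk

variable {ι : Type*} [Fintype ι]

lemma lt_sum_mul_of_lt_mul {c x : ι → ℝ} (hc : ∀ j, 0 ≤ c j) (hx : ∀ j, 0 ≤ x j) {k : ι}
    {a r : ℝ} (hak : a ≤ c k) (h : r < a * x k) : r < ∑ j, c j * x j :=
  h.trans_le <| (mul_le_mul_of_nonneg_right hak (hx k)).trans <|
    Finset.single_le_sum (fun j _ => mul_nonneg (hc j) (hx j)) (Finset.mem_univ k)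

lemma sum_mul_le_mul_add_card_mul {c x : ι → ℝ} (hc0 : ∀ j, 0 ≤ c j) (hc1 : ∀ j, c j ≤ 1)
    {k : ι} {m : ℝ} (hm : 0 ≤ m) (h : ∀ j ≠ k, x j ≤ m) :
    ∑ j, c j * x j ≤ c k * x k + Fintype.card ι * m := by
  classical
  rw [← Finset.add_sum_erase _ _ (Finset.mem_univ k)]
  gcongr
  calc ∑ j ∈ Finset.univ.erase k, c j * x j ≤ ∑ _j ∈ Finset.univ.erase k, m :=
        Finset.sum_le_sum fun j hj =>
          (mul_le_mul_of_nonneg_left (h j (Finset.ne_of_mem_erase hj)) (hc0 j)).trans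
            (mul_le_of_le_one_left hm (hc1 j))
    _ ≤ ∑ _j : ι, m :=
        Finset.sum_le_sum_of_subset_of_nonneg (Finset.erase_subset _ _) fun _ _ _ => hm
    _ = Fintype.card ι * m := by simp

lemma exists_pair_lt_or_exists_lt_min_mul [Nonempty ι] {c₁ c₂ x : ι → ℝ}
    (hc₁0 : ∀ j, 0 ≤ c₁ j) (hc₁1 : ∀ j, c₁ j ≤ 1) (hc₂0 : ∀ j, 0 ≤ c₂ j) (hc₂1 : ∀ j, c₂ j ≤ 1)
    {m r : ℝ} (hm : 0 ≤ m) (h₁ : r < ∑ j, c₁ j * x j) (h₂ : r < ∑ j, c₂ j * x j) :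
    (∃ j k, j ≠ k ∧ m < x j ∧ m < x k) ∨ ∃ k, r - Fintype.card ι * m < min (c₁ k) (c₂ k) * x k := by
  refine (exists_pair_lt_or_exists_forall_ne_le x m).imp_right fun ⟨k, hk⟩ => ⟨k, ?_⟩
  have e₁ := sum_mul_le_mul_add_card_mul hc₁0 hc₁1 hm hk
  have e₂ := sum_mul_le_mul_add_card_mul hc₂0 hc₂1 hm hk
  rcases min_choice (c₁ k) (c₂ k) with h | h <;> rw [h] <;> linarith

end Deterministic

section JointExceedance

variable {Ω ι : Type*} [MeasurableSpace Ω] {P : Measure Ω} [Fintype ι]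
  {γ : ℝ} {X : ι → Ω → ℝ} {B₁ B₂ : ι → ℝ}

lemma one_sub_prod_le_measureReal_joint [IsProbabilityMeasure P] (hγ : 0 < γ)
    (hX : ∀ k, Measurable (X k)) (hindep : iIndepFun X P)
    (htail : ∀ k, ∀ x : ℝ, 1 ≤ x → P.real {ω | x < X k ω} = x ^ (-γ))
    (hB₁0 : ∀ k, 0 ≤ B₁ k) (hB₁1 : ∀ k, B₁ k ≤ 1) (hB₂0 : ∀ k, 0 ≤ B₂ k) {r : ℝ} (hr : 1 ≤ r) :
    1 - ∏ k, (1 - min (B₁ k) (B₂ k) * r ^ (-γ)) ≤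
      P.real {ω | r < ∑ k, B₁ k ^ (1 / γ) * X k ω ∧ r < ∑ k, B₂ k ^ (1 / γ) * X k ω} := by
  set d : ι → ℝ := fun k => min (B₁ k) (B₂ k) ^ (1 / γ)
  have hunion := hindep.measureReal_iUnion_preimage hX (S := fun k => {x | r < d k * x})
    fun k => measurableSet_lt measurable_const (measurable_const.mul measurable_id)
  have hd : ∀ k, P.real {ω | r < d k * X k ω} = min (B₁ k) (B₂ k) * r ^ (-γ) := fun k =>
    measureReal_lt_rpow_mul_of_tail hγ (htail k) (le_min (hB₁0 k) (hB₂0 k))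
      (min_le_of_left_le (hB₁1 k)) hr
  have hnonneg : ∀ᵐ ω ∂P, ∀ k, 0 ≤ X k ω := by
    filter_upwards [ae_all_iff.2 fun k => ae_one_lt_of_tail (hX k) (htail k)] with ω hω k
    exact zero_le_one.trans (hω k).le
  have hd_eq : ∀ k, d k = min (B₁ k ^ (1 / γ)) (B₂ k ^ (1 / γ)) := fun k =>
    Real.min_rpow (hB₁0 k) (hB₂0 k) (one_div_pos.2 hγ).le
  simp only [Set.preimage_ofPred_eq, hd] at hunion
  rw [← hunion]
  refine ENNReal.toReal_mono (measure_ne_top _ _) (measure_mono_ae ?_)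
  filter_upwards [hnonneg] with ω hω hmem
  obtain ⟨k, hk⟩ := Set.mem_iUnion.1 hmem
  exact ⟨lt_sum_mul_of_lt_mul (fun j => Real.rpow_nonneg (hB₁0 j) _) hω
      ((hd_eq k).trans_le (min_le_left _ _)) hk,
    lt_sum_mul_of_lt_mul (fun j => Real.rpow_nonneg (hB₂0 j) _) hω
      ((hd_eq k).trans_le (min_le_right _ _)) hk⟩

lemma measureReal_exists_pair_lt_le (hindep : iIndepFun X P)
    (htail : ∀ k, ∀ x : ℝ, 1 ≤ x → P.real {ω | x < X k ω} = x ^ (-γ)) {m : ℝ} (hm : 1 ≤ m) :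
    P.real {ω | ∃ j k, j ≠ k ∧ m < X j ω ∧ m < X k ω} ≤
      Fintype.card ι ^ 2 * (m ^ (-γ)) ^ 2 := by
  classical
  have hset : {ω | ∃ j k, j ≠ k ∧ m < X j ω ∧ m < X k ω} =
      ⋃ p ∈ (Finset.univ : Finset ι).offDiag, X p.1 ⁻¹' Set.Ioi m ∩ X p.2 ⁻¹' Set.Ioi m := by
    ext ω
    simp only [Set.mem_ofPred_eq, Set.mem_iUnion, Finset.mem_offDiag, Finset.mem_univ, true_and,
      Set.mem_inter_iff, Set.mem_preimage, Set.mem_Ioi, exists_prop, Prod.exists]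
  have hpair : ∀ p ∈ (Finset.univ : Finset ι).offDiag,
      P.real (X p.1 ⁻¹' Set.Ioi m ∩ X p.2 ⁻¹' Set.Ioi m) = (m ^ (-γ)) ^ 2 := fun p hp => by
    rw [measureReal_def, (hindep.indepFun (Finset.mem_offDiag.1 hp).2.2
      ).measure_inter_preimage_eq_mul _ _ measurableSet_Ioi measurableSet_Ioi,
      ENNReal.toReal_mul, sq]
    exact congrArg₂ (· * ·) (htail p.1 m hm) (htail p.2 m hm)
  calc _ ≤ ∑ p ∈ (Finset.univ : Finset ι).offDiag,
        P.real (X p.1 ⁻¹' Set.Ioi m ∩ X p.2 ⁻¹' Set.Ioi m) :=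
          hset ▸ measureReal_biUnion_finset_le _ _
    _ = (Finset.univ : Finset ι).offDiag.card * (m ^ (-γ)) ^ 2 := by
        rw [Finset.sum_congr rfl hpair, Finset.sum_const, nsmul_eq_mul]
    _ ≤ Fintype.card ι ^ 2 * (m ^ (-γ)) ^ 2 := by
        gcongr
        rw [Finset.offDiag_card, Finset.card_univ, sq]
        exact_mod_cast Nat.sub_le _ _

lemma measureReal_joint_le [IsProbabilityMeasure P] [Nonempty ι] (hγ : 0 < γ)
    (hindep : iIndepFun X P)
    (htail : ∀ k, ∀ x : ℝ, 1 ≤ x → P.real {ω | x < X k ω} = x ^ (-γ))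
    (hB₁0 : ∀ k, 0 ≤ B₁ k) (hB₁1 : ∀ k, B₁ k ≤ 1) (hB₂0 : ∀ k, 0 ≤ B₂ k) (hB₂1 : ∀ k, B₂ k ≤ 1)
    {m r : ℝ} (hm : 1 ≤ m) (hrm : 1 ≤ r - Fintype.card ι * m) :
    P.real {ω | r < ∑ k, B₁ k ^ (1 / γ) * X k ω ∧ r < ∑ k, B₂ k ^ (1 / γ) * X k ω} ≤
      Fintype.card ι ^ 2 * (m ^ (-γ)) ^ 2 +
        (∑ k, min (B₁ k) (B₂ k)) * (r - Fintype.card ι * m) ^ (-γ) := by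
  set t := r - Fintype.card ι * m
  have hγ' : 0 ≤ 1 / γ := (one_div_pos.2 hγ).le
  have hsub : {ω | r < ∑ k, B₁ k ^ (1 / γ) * X k ω ∧ r < ∑ k, B₂ k ^ (1 / γ) * X k ω} ⊆
      {ω | ∃ j k, j ≠ k ∧ m < X j ω ∧ m < X k ω} ∪
        ⋃ k, {ω | t < min (B₁ k) (B₂ k) ^ (1 / γ) * X k ω} := by
    rintro ω ⟨h₁, h₂⟩
    rcases exists_pair_lt_or_exists_lt_min_mul (fun j => Real.rpow_nonneg (hB₁0 j) _)
      (fun j => Real.rpow_le_one (hB₁0 j) (hB₁1 j) hγ') (fun j => Real.rpow_nonneg (hB₂0 j) _)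
      (fun j => Real.rpow_le_one (hB₂0 j) (hB₂1 j) hγ') (zero_le_one.trans hm) h₁ h₂
      with hpair | ⟨k, hk⟩
    · exact Or.inl hpair
    · refine Or.inr (Set.mem_iUnion.2 ⟨k, ?_⟩)
      rwa [Set.mem_ofPred_eq, Real.min_rpow (hB₁0 k) (hB₂0 k) hγ']
  have hsingle : P.real (⋃ k, {ω | t < min (B₁ k) (B₂ k) ^ (1 / γ) * X k ω}) ≤
      (∑ k, min (B₁ k) (B₂ k)) * t ^ (-γ) := by
    refine (measureReal_iUnion_fintype_le _).trans_eq ?_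
    rw [Finset.sum_mul]
    exact Finset.sum_congr rfl fun k _ => measureReal_lt_rpow_mul_of_tail hγ (htail k)
      (le_min (hB₁0 k) (hB₂0 k)) (min_le_of_left_le (hB₁1 k)) hrm
  calc _ ≤ _ := measureReal_mono hsub
    _ ≤ _ := measureReal_union_le _ _
    _ ≤ _ := add_le_add (measureReal_exists_pair_lt_le hindep htail hm) hsingle

end JointExceedance

lemma tendsto_rpow_neg_atTop_nhdsNE_zero {γ : ℝ} (hγ : 0 < γ) :
    Tendsto (fun r : ℝ => r ^ (-γ)) atTop (𝓝[≠] 0) :=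
  tendsto_nhdsWithin_iff.2 ⟨tendsto_rpow_neg_atTop hγ, by
    filter_upwards [eventually_gt_atTop 0] with r hr
    exact (Real.rpow_pos_of_pos hr _).ne'⟩

lemma HasDerivAt.tendsto_rpow_mul_comp_rpow_neg {g : ℝ → ℝ} {L γ : ℝ} (hg : HasDerivAt g L 0)
    (hg0 : g 0 = 0) (hγ : 0 < γ) : Tendsto (fun r => r ^ γ * g (r ^ (-γ))) atTop (𝓝 L) := by
  refine ((hasDerivAt_iff_tendsto_slope.1 hg).comp
    (tendsto_rpow_neg_atTop_nhdsNE_zero hγ)).congr' ?_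
  filter_upwards [eventually_gt_atTop 0] with r hr
  rw [Function.comp_apply, slope_def_field, hg0, sub_zero, sub_zero, Real.rpow_neg hr.le,
    div_inv_eq_mul, mul_comm]

lemma hasDerivAt_one_sub_prod_one_sub_mul {ι : Type*} [Fintype ι] (a : ι → ℝ) :
    HasDerivAt (fun t => 1 - ∏ k, (1 - a k * t)) (∑ k, a k) 0 := by
  have hfac : ∀ k, HasDerivAt (fun t : ℝ => 1 - a k * t) (-a k) 0 := fun k => by
    simpa using ((hasDerivAt_id (0 : ℝ)).const_mul (a k)).const_sub 1
  classical
  exact ((HasDerivAt.fun_finsetProd fun k _ => hfac k).const_sub 1).congr_deriv (by simp)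

lemma tendsto_rpow_mul_rpow_three_quarters_rpow_neg_sq {γ : ℝ} (hγ : 0 < γ) :
    Tendsto (fun r : ℝ => r ^ γ * ((r ^ (3 / 4 : ℝ)) ^ (-γ)) ^ 2) atTop (𝓝 0) := by
  refine (tendsto_rpow_neg_atTop (half_pos hγ)).congr' ?_
  filter_upwards [eventually_gt_atTop 0] with r hr
  rw [← Real.rpow_mul hr.le, ← Real.rpow_natCast, ← Real.rpow_mul hr.le, ← Real.rpow_add hr]
  norm_num
  ring_nf

lemma tendsto_sub_mul_rpow_three_quarters_div (K : ℝ) :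
    Tendsto (fun r : ℝ => (r - K * r ^ (3 / 4 : ℝ)) / r) atTop (𝓝 1) := by
  have h := ((tendsto_rpow_neg_atTop (by norm_num : (0 : ℝ) < 1 / 4)).const_mul K).const_sub 1
  rw [mul_zero, sub_zero] at h
  refine h.congr' ?_
  filter_upwards [eventually_gt_atTop 0] with r hr
  rw [sub_div, div_self hr.ne', mul_div_assoc, ← Real.rpow_sub_one hr.ne']
  norm_num

lemma eventually_one_le_sub_mul_rpow_three_quarters (K : ℝ) :
    ∀ᶠ r : ℝ in atTop, 1 ≤ r - K * r ^ (3 / 4 : ℝ) := by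
  filter_upwards [(tendsto_sub_mul_rpow_three_quarters_div K).eventually (eventually_ge_nhds
    (by norm_num : (1 / 2 : ℝ) < 1)), eventually_ge_atTop 2] with r hratio hr
  rw [le_div_iff₀ (by linarith)] at hratio
  linarith

lemma tendsto_rpow_mul_sub_mul_rpow_three_quarters_rpow_neg (γ K : ℝ) :
    Tendsto (fun r : ℝ => r ^ γ * (r - K * r ^ (3 / 4 : ℝ)) ^ (-γ)) atTop (𝓝 1) := by
  have h := ((Real.continuousAt_rpow_const 1 (-γ) (Or.inl one_ne_zero)).tendsto.comp
    (tendsto_sub_mul_rpow_three_quarters_div K))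
  rw [Real.one_rpow] at h
  refine h.congr' ?_
  filter_upwards [eventually_one_le_sub_mul_rpow_three_quarters K, eventually_gt_atTop 0]
    with r hrm hr
  rw [Function.comp_apply, Real.div_rpow (by linarith) hr.le, Real.rpow_neg hr.le γ,
    div_inv_eq_mul, mul_comm]

theorem tendsto_rpow_mul_measureReal_joint {Ω ι : Type*} [MeasurableSpace Ω] {P : Measure Ω}
    [IsProbabilityMeasure P] [Fintype ι] [Nonempty ι] {γ : ℝ} (hγ : 0 < γ) {X : ι → Ω → ℝ}
    (hX : ∀ k, Measurable (X k)) (hindep : iIndepFun X P)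
    (htail : ∀ k, ∀ x : ℝ, 1 ≤ x → P.real {ω | x < X k ω} = x ^ (-γ))
    {B₁ B₂ : ι → ℝ} (hB₁0 : ∀ k, 0 ≤ B₁ k) (hB₁1 : ∀ k, B₁ k ≤ 1) (hB₂0 : ∀ k, 0 ≤ B₂ k)
    (hB₂1 : ∀ k, B₂ k ≤ 1) :
    Tendsto (fun r => r ^ γ *
        P.real {ω | r < ∑ k, B₁ k ^ (1 / γ) * X k ω ∧ r < ∑ k, B₂ k ^ (1 / γ) * X k ω})
      atTop (𝓝 (∑ k, min (B₁ k) (B₂ k))) := by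
  set S := ∑ k, min (B₁ k) (B₂ k)
  set K : ℝ := (Fintype.card ι : ℝ)
  have hlower := (hasDerivAt_one_sub_prod_one_sub_mul fun k => min (B₁ k) (B₂ k)
    ).tendsto_rpow_mul_comp_rpow_neg (by simp) hγ
  have hupper : Tendsto (fun r : ℝ => r ^ γ * (K ^ 2 * ((r ^ (3 / 4 : ℝ)) ^ (-γ)) ^ 2 +
      S * (r - K * r ^ (3 / 4 : ℝ)) ^ (-γ))) atTop (𝓝 S) := by
    have h := ((tendsto_rpow_mul_rpow_three_quarters_rpow_neg_sq hγ).const_mul (K ^ 2)).add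
      ((tendsto_rpow_mul_sub_mul_rpow_three_quarters_rpow_neg γ K).const_mul S)
    rw [mul_zero, zero_add, mul_one] at h
    exact h.congr fun r => by ring
  refine tendsto_of_tendsto_of_tendsto_of_le_of_le' hlower hupper ?_ ?_
  · filter_upwards [eventually_ge_atTop 1] with r hr
    exact mul_le_mul_of_nonneg_left (one_sub_prod_le_measureReal_joint hγ hX hindep htail
      hB₁0 hB₁1 hB₂0 hr) (Real.rpow_nonneg (by linarith) _)
  · filter_upwards [eventually_ge_atTop 1, eventually_one_le_sub_mul_rpow_three_quarters K]
      with r hr hrm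
    exact mul_le_mul_of_nonneg_left (measureReal_joint_le hγ hindep htail hB₁0 hB₁1 hB₂0 hB₂1
      (Real.one_le_rpow hr (by norm_num)) hrm) (Real.rpow_nonneg (by linarith) _)

theorem tail_correlation_lowrank_scale_general
    {Ω : Type*} [MeasurableSpace Ω] (P : Measure Ω) [IsProbabilityMeasure P]
    (K : ℕ) (γ : ℝ) (hγ : 0 < γ) (X : Fin K → Ω → ℝ)
    (hmeas : ∀ k, Measurable (X k))
    (hindep : iIndepFun X P)
    (htail : ∀ k, ∀ x : ℝ, 1 ≤ x → (P {ω | x < X k ω}).toReal = x ^ (-γ))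
    (B₁ B₂ : Fin K → ℝ) (hB₁ : ∀ k, 0 ≤ B₁ k) (hB₂ : ∀ k, 0 ≤ B₂ k)
    (hB₁sum : ∑ k, B₁ k = 1) (hB₂sum : ∑ k, B₂ k = 1)
    (R₁ R₂ : Ω → ℝ)
    (hR₁ : ∀ ω, R₁ ω = ∑ k, (B₁ k) ^ (1 / γ) * X k ω)
    (hR₂ : ∀ ω, R₂ ω = ∑ k, (B₂ k) ^ (1 / γ) * X k ω) :
    Tendsto (fun r : ℝ =>
        (P {ω | r < R₁ ω ∧ r < R₂ ω}).toReal / (P {ω | r < R₂ ω}).toReal)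
      atTop (nhds (∑ k, min (B₁ k) (B₂ k))) := by
  have hle_one : ∀ {B : Fin K → ℝ}, (∀ k, 0 ≤ B k) → ∑ k, B k = 1 → ∀ k, B k ≤ 1 :=
    fun hB hsum k => hsum ▸ Finset.single_le_sum (fun j _ => hB j) (Finset.mem_univ k)
  have : Nonempty (Fin K) := Fin.pos_iff_nonempty.1 <| Nat.pos_of_ne_zero fun hK => by
    subst hK; simp at hB₁sum
  obtain rfl : R₁ = _ := funext hR₁
  obtain rfl : R₂ = _ := funext hR₂
  have hnum := tendsto_rpow_mul_measureReal_joint hγ hmeas hindep htail hB₁ (hle_one hB₁ hB₁sum)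
    hB₂ (hle_one hB₂ hB₂sum)
  have hden := tendsto_rpow_mul_measureReal_joint hγ hmeas hindep htail hB₂ (hle_one hB₂ hB₂sum)
    hB₂ (hle_one hB₂ hB₂sum)
  simp only [min_self, and_self, hB₂sum] at hden
  refine ((hnum.div hden one_ne_zero).congr' ?_).trans (by rw [div_one])
  filter_upwards [eventually_gt_atTop 0] with r hr
  exact mul_div_mul_left _ _ (Real.rpow_pos_of_pos hr γ).ne'

/-- (Proposition 2.) If `X 1, …, X K` are independent Pareto(γ) random
variables (γ > 0) and the nonnegative weights `B₁ k` and `B₂ k` each sum to one, then for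
`R₁ = ∑ k, (B₁ k)^(1/γ) * X k` and `R₂ = ∑ k, (B₂ k)^(1/γ) * X k` the tail-correlation
coefficient satisfies `P(R₁ > r and R₂ > r) / P(R₂ > r) → ∑ k, min (B₁ k) (B₂ k)`. -/
theorem tail_correlation_lowrank_scale
    {Ω : Type*} [MeasurableSpace Ω] (P : Measure Ω) [IsProbabilityMeasure P]
    (K : ℕ) (γ : ℝ) (hγ : 0 < γ) (X : Fin K → Ω → ℝ)
    (hmeas : ∀ k, Measurable (X k))
    (hindep : iIndepFun X P)
    (htail : ∀ k, ∀ x : ℝ, 1 ≤ x → (P {ω | x < X k ω}).toReal = x ^ (-γ))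
    (hlow : ∀ k, ∀ x : ℝ, x < 1 → (P {ω | x < X k ω}).toReal = 1)
    (B₁ B₂ : Fin K → ℝ) (hB₁ : ∀ k, 0 ≤ B₁ k) (hB₂ : ∀ k, 0 ≤ B₂ k)
    (hB₁sum : ∑ k, B₁ k = 1) (hB₂sum : ∑ k, B₂ k = 1)
    (R₁ R₂ : Ω → ℝ)
    (hR₁ : ∀ ω, R₁ ω = ∑ k, (B₁ k) ^ (1 / γ) * X k ω)
    (hR₂ : ∀ ω, R₂ ω = ∑ k, (B₂ k) ^ (1 / γ) * X k ω) :
    Tendsto (fun r : ℝ =>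
        (P {ω | r < R₁ ω ∧ r < R₂ ω}).toReal / (P {ω | r < R₂ ω}).toReal)
      atTop (nhds (∑ k, min (B₁ k) (B₂ k))) :=
  tail_correlation_lowrank_scale_general P K γ hγ X hmeas hindep htail B₁ B₂ hB₁ hB₂ hB₁sum hB₂sum
    R₁ R₂ hR₁ hR₂
end

section
/- Let R be a Pareto(γ) random variable with γ > 0, and let Z be a standard normal random variable independent of R. Then lim_{x→∞} x^γ · P(R·Z > x) = E[max(Z,0)^γ] = ∫_ℝ max(z,0)^γ φ(z) dz, where φ is the standard normal density. -/
/-!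
Conditioning on `Z = z`, the Pareto tail gives `x^γ P(R z > x) = min (x^γ, (z⁺)^γ)` exactly
(for `0 < z ≤ x` it is `x^γ (x/z)^{-γ}`; for `z > x`, `R ≥ 1 > x/z` almost surely; for `z ≤ 0`
both sides vanish as `R > 0`). Hence
`x^γ P(RZ > x) = E[min (x^γ, (Z⁺)^γ)]`, which increases to `E[(Z⁺)^γ]`; the limit is finite
since Gaussian moments of every order are.
-/

open MeasureTheory ProbabilityTheory Filter Topology

lemma integrable_max_rpow_gaussianReal {γ : ℝ} (hγ : 0 ≤ γ) (μ : ℝ) (v : NNReal) :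
    Integrable (fun z : ℝ => max z 0 ^ γ) (gaussianReal μ v) := by
  have hmoment : Integrable (fun z : ℝ => ‖z‖ ^ γ) (gaussianReal μ v) := by
    simpa [hγ] using
      (memLp_id_gaussianReal' (μ := μ) (v := v) (ENNReal.ofReal γ)
        ENNReal.ofReal_ne_top).integrable_norm_rpow'
  refine hmoment.mono' (by fun_prop) (ae_of_all _ fun z => ?_)
  rw [Real.norm_of_nonneg (by positivity)]
  exact Real.rpow_le_rpow (le_max_right _ _) (max_le (le_abs_self z) (abs_nonneg z)) hγ

lemma tendsto_integral_min_atTop {α : Type*} [MeasurableSpace α] {μ : Measure α} {f : α → ℝ}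
    (hf : Integrable f μ) :
    Tendsto (fun c : ℝ => ∫ a, min c (f a) ∂μ) atTop (𝓝 (∫ a, f a ∂μ)) := by
  refine tendsto_integral_filter_of_dominated_convergence (fun a => ‖f a‖)
    (Eventually.of_forall fun c => aestronglyMeasurable_const.inf hf.aestronglyMeasurable)
    ?_ hf.norm (ae_of_all _ fun a => ?_)
  · filter_upwards [eventually_ge_atTop 0] with c hc
    refine ae_of_all _ fun a => ?_
    rw [Real.norm_eq_abs, Real.norm_eq_abs]
    refine abs_le.2 ⟨?_, (min_le_right _ _).trans (le_abs_self _)⟩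
    exact le_min (by linarith [abs_nonneg (f a)]) (neg_abs_le _)
  · exact tendsto_const_nhds.congr'
      ((eventually_ge_atTop (f a)).mono fun c hc => (min_eq_right hc).symm)

section Independence

variable {Ω β β' : Type*} [MeasurableSpace Ω] [MeasurableSpace β] [MeasurableSpace β']
  {P : Measure Ω} {X : Ω → β} {s : Set (β × β')}

lemma map_apply_preimage_prodMk_right (hX : Measurable X) (hs : MeasurableSet s) (y : β') :
    P.map X ((fun x => (x, y)) ⁻¹' s) = P {ω | (X ω, y) ∈ s} :=
  Measure.map_apply hX (measurable_prodMk_right hs)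

variable [IsFiniteMeasure P] {Y : Ω → β'}

lemma ProbabilityTheory.IndepFun.measure_preimage_prod_eq_lintegral (hXY : IndepFun X Y P)
    (hX : Measurable X) (hY : Measurable Y) (hs : MeasurableSet s) :
    P {ω | (X ω, Y ω) ∈ s} = ∫⁻ y, P {ω | (X ω, y) ∈ s} ∂(P.map Y) := by
  have hjoint : P.map (fun ω => (X ω, Y ω)) = (P.map X).prod (P.map Y) :=
    (indepFun_iff_map_prod_eq_prod_map_map hX.aemeasurable hY.aemeasurable).1 hXY
  change P ((fun ω => (X ω, Y ω)) ⁻¹' s) = _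
  simp_rw [← Measure.map_apply (hX.prodMk hY) hs, hjoint, Measure.prod_apply_symm hs,
    map_apply_preimage_prodMk_right hX hs]

lemma ProbabilityTheory.IndepFun.toReal_measure_preimage_prod_eq_integral
    (hXY : IndepFun X Y P) (hX : Measurable X) (hY : Measurable Y) (hs : MeasurableSet s) :
    (P {ω | (X ω, Y ω) ∈ s}).toReal = ∫ y, (P {ω | (X ω, y) ∈ s}).toReal ∂(P.map Y) := by
  rw [hXY.measure_preimage_prod_eq_lintegral hX hY hs, integral_toReal]
  · simp_rw [← map_apply_preimage_prodMk_right hX hs]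
    exact (measurable_measure_prodMk_right hs).aemeasurable
  · exact ae_of_all _ fun y => measure_lt_top _ _

end Independence

section Pareto

variable {Ω : Type*} [MeasurableSpace Ω] {P : Measure Ω} [IsProbabilityMeasure P] {R : Ω → ℝ}
  {γ : ℝ}

lemma measure_nonpos_eq_zero_of_measure_pos_eq_one (hR : Measurable R)
    (hpos : (P {ω | 0 < R ω}).toReal = 1) : P {ω | R ω ≤ 0} = 0 := by
  have hcompl : {ω | R ω ≤ 0} = {ω | 0 < R ω}ᶜ := by
    ext ω
    simp
  rw [hcompl, prob_compl_eq_zero_iff (measurableSet_lt measurable_const hR)]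
  exact (ENNReal.toReal_eq_one_iff _).1 hpos

lemma rpow_mul_toReal_measure_lt_mul_eq_min (hγ : 0 < γ) (hR : Measurable R)
    (hRtail : ∀ x : ℝ, 1 ≤ x → (P {ω | x < R ω}).toReal = x ^ (-γ))
    (hRlow : ∀ x : ℝ, x < 1 → (P {ω | x < R ω}).toReal = 1) {x : ℝ} (hx : 0 < x) (z : ℝ) :
    x ^ γ * (P {ω | x < R ω * z}).toReal = min (x ^ γ) (max z 0 ^ γ) := by
  rcases le_or_gt z 0 with hz | hz
  · have hnull : P {ω | x < R ω * z} = 0 := by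
      refine measure_mono_null (fun ω (hω : x < R ω * z) => ?_)
        (measure_nonpos_eq_zero_of_measure_pos_eq_one hR (hRlow 0 one_pos))
      change R ω ≤ 0
      by_contra! hRω
      nlinarith [mul_nonpos_of_nonneg_of_nonpos hRω.le hz]
    rw [hnull, max_eq_right hz, Real.zero_rpow hγ.ne', min_eq_right (by positivity)]
    simp
  · have hset : {ω | x < R ω * z} = {ω | x / z < R ω} := by
      ext ω
      exact (div_lt_iff₀ hz).symm
    rw [hset, max_eq_left hz.le]
    rcases le_or_gt z x with hzx | hxz
    · rw [hRtail _ ((one_le_div hz).2 hzx), Real.rpow_neg (by positivity),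
        Real.div_rpow hx.le hz.le, inv_div, mul_div_cancel₀ _ (by positivity),
        min_eq_right (Real.rpow_le_rpow hz.le hzx hγ.le)]
    · rw [hRlow _ ((div_lt_one hz).2 hxz), mul_one,
        min_eq_left (Real.rpow_le_rpow hx.le hxz.le hγ.le)]

end Pareto

/-- (Breiman's lemma instance.) If `R` is Pareto(γ) with γ > 0 and `Z` is
standard normal, independent of `R`, then
`x^γ · P(R·Z > x) → E[max(Z,0)^γ] = ∫ max(z,0)^γ φ(z) dz` as `x → ∞`,
where `φ` is the standard normal density. -/
theorem breiman_pareto_gaussian_mixture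
    {Ω : Type*} [MeasurableSpace Ω] (P : Measure Ω) [IsProbabilityMeasure P]
    (γ : ℝ) (hγ : 0 < γ) (R Z : Ω → ℝ)
    (hRmeas : Measurable R) (hZmeas : Measurable Z)
    (hRtail : ∀ x : ℝ, 1 ≤ x → (P {ω | x < R ω}).toReal = x ^ (-γ))
    (hRlow : ∀ x : ℝ, x < 1 → (P {ω | x < R ω}).toReal = 1)
    (hZ : Measure.map Z P = gaussianReal 0 1)
    (hindep : IndepFun R Z P) :
    Tendsto (fun x : ℝ => x ^ γ * (P {ω | x < R ω * Z ω}).toReal)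
        atTop (nhds (∫ ω, max (Z ω) 0 ^ γ ∂P)) ∧
      (∫ ω, max (Z ω) 0 ^ γ ∂P) = ∫ z : ℝ, max z 0 ^ γ * gaussianPDFReal 0 1 z := by
  have hlaw : ∫ ω, max (Z ω) 0 ^ γ ∂P = ∫ z, max z 0 ^ γ ∂(gaussianReal 0 1) := by
    rw [← hZ, integral_map hZmeas.aemeasurable (by fun_prop (disch := exact hγ.le))]
  refine ⟨?_, ?_⟩
  · rw [hlaw]
    refine ((tendsto_integral_min_atTop (integrable_max_rpow_gaussianReal hγ.le 0 1)).comp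
      (tendsto_rpow_atTop hγ)).congr' ?_
    filter_upwards [eventually_gt_atTop 0] with x hx
    have hcond := hindep.toReal_measure_preimage_prod_eq_integral hRmeas hZmeas
      (s := {p : ℝ × ℝ | x < p.1 * p.2}) (measurableSet_lt measurable_const (by fun_prop))
    simp only [Set.mem_ofPred_eq] at hcond
    rw [Function.comp_apply, hcond, hZ, ← integral_const_mul]
    exact integral_congr_ae (ae_of_all _ fun z =>
      (rpow_mul_toReal_measure_lt_mul_eq_min hγ hRmeas hRtail hRlow hx z).symm)
  · rw [hlaw, integral_gaussianReal_eq_integral_smul one_ne_zero]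
    simp_rw [smul_eq_mul, mul_comm]
end

section
/- Let β > 0, γ > 0, let R be a Weibull-type(β,γ) random variable, and let Z be a standard normal random variable independent of R. Then lim_{x→∞} log(−log P(R·Z > x)) / log x = 2β/(β + 2); that is, the product R·Z is Weibull-tailed with tail index 2β/(2 + β). -/
/-!
Put `α = 2β/(β+2)` and split `x = s t` with `s ^ β = t ^ 2 = x ^ α`, so that the Weibull tail
`P(R > s) = exp(-γ(s ^ β - 1)/β)` and the Gaussian tail `P(Z > t) ≈ exp(-t ^ 2/2)` are both of
order `exp(-Θ(x ^ α))`. Independence gives `P(R > s) P(Z > t) ≤ P(RZ > x)`, and since `R ≥ 0`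
almost surely the union bound gives `P(RZ > x) ≤ P(R > s) + P(Z > t)`. Hence `-log P(RZ > x)` lies
between two positive multiples of `x ^ α`, and `log(-log P(RZ > x)) / log x → α`.
-/

open MeasureTheory ProbabilityTheory Filter
open Real Set Topology

section GaussianTail

lemma gaussianPDFReal_zero_one (x : ℝ) :
    gaussianPDFReal 0 1 x = (√(2 * π))⁻¹ * exp (-(x ^ 2 / 2)) := by
  simp [gaussianPDFReal, neg_div]

lemma gaussianReal_real_apply (μ : ℝ) {v : NNReal} (hv : v ≠ 0) (s : Set ℝ) :
    (gaussianReal μ v).real s = ∫ x in s, gaussianPDFReal μ v x := by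
  rw [measureReal_def, gaussianReal_apply_eq_integral μ hv,
    ENNReal.toReal_ofReal (integral_nonneg fun x => gaussianPDFReal_nonneg μ v x)]

lemma one_le_sqrt_two_mul_pi : 1 ≤ √(2 * π) :=
  one_le_sqrt.2 (by nlinarith [pi_gt_three])

lemma hasDerivAt_neg_exp_neg_sq_div_two (x : ℝ) :
    HasDerivAt (fun y => -exp (-(y ^ 2 / 2))) (x * exp (-(x ^ 2 / 2))) x := by
  have h := (((hasDerivAt_pow 2 x).div_const 2).fun_neg).exp.fun_neg
  exact h.congr_deriv (by norm_num; ring)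

lemma tendsto_neg_exp_neg_sq_div_two :
    Tendsto (fun y : ℝ => -exp (-(y ^ 2 / 2))) atTop (𝓝 0) := by
  have h : Tendsto (fun y : ℝ => y ^ 2 / 2) atTop atTop :=
    (tendsto_pow_atTop two_ne_zero).atTop_div_const two_pos
  simpa using (tendsto_exp_atBot.comp (tendsto_neg_atTop_atBot.comp h)).neg

lemma integrableOn_Ioi_mul_exp_neg_sq_div_two {t : ℝ} (ht : 0 ≤ t) :
    IntegrableOn (fun x => x * exp (-(x ^ 2 / 2))) (Ioi t) :=
  integrableOn_Ioi_deriv_of_nonneg' (fun x _ => hasDerivAt_neg_exp_neg_sq_div_two x)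
    (fun _ hx => mul_nonneg (ht.trans (le_of_lt hx)) (exp_nonneg _))
    tendsto_neg_exp_neg_sq_div_two

lemma integral_Ioi_mul_exp_neg_sq_div_two {t : ℝ} (ht : 0 ≤ t) :
    ∫ x in Ioi t, x * exp (-(x ^ 2 / 2)) = exp (-(t ^ 2 / 2)) := by
  rw [integral_Ioi_of_hasDerivAt_of_tendsto' (fun x _ => hasDerivAt_neg_exp_neg_sq_div_two x)
    (integrableOn_Ioi_mul_exp_neg_sq_div_two ht) tendsto_neg_exp_neg_sq_div_two]
  ring

lemma gaussianReal_real_Ioi_le_exp {t : ℝ} (ht : 1 ≤ t) :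
    (gaussianReal 0 1).real (Ioi t) ≤ exp (-(t ^ 2 / 2)) := by
  have ht0 : 0 ≤ t := zero_le_one.trans ht
  rw [gaussianReal_real_apply 0 one_ne_zero, ← integral_Ioi_mul_exp_neg_sq_div_two ht0]
  refine setIntegral_mono_on (integrable_gaussianPDFReal 0 1).integrableOn
    (integrableOn_Ioi_mul_exp_neg_sq_div_two ht0) measurableSet_Ioi fun x hx => ?_
  rw [gaussianPDFReal_zero_one]
  gcongr
  exact (inv_le_one_of_one_le₀ one_le_sqrt_two_mul_pi).trans (ht.trans (le_of_lt hx))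

-- On `(t, t + 1]` the density is at least its value at `t + 1`.
lemma exp_neg_mul_sq_le_gaussianReal_real_Ioi {t : ℝ} (ht : 1 ≤ t) :
    exp (-((2 + log √(2 * π)) * t ^ 2)) ≤ (gaussianReal 0 1).real (Ioi t) := by
  have hpdf : ∀ x ∈ Ioc t (t + 1), gaussianPDFReal 0 1 (t + 1) ≤ gaussianPDFReal 0 1 x := by
    intro x hx
    simp only [gaussianPDFReal_zero_one]
    gcongr <;> linarith [hx.1, hx.2]
  have hIoc := setIntegral_ge_of_const_le_real measurableSet_Ioc (by simp) hpdf
    (integrable_gaussianPDFReal 0 1).integrableOn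
  simp only [Real.volume_real_Ioc, add_sub_cancel_left, max_eq_left zero_le_one, mul_one] at hIoc
  calc exp (-((2 + log √(2 * π)) * t ^ 2))
      ≤ exp (-((t + 1) ^ 2 / 2) - log √(2 * π)) := by
        gcongr
        have hL := log_nonneg one_le_sqrt_two_mul_pi
        nlinarith [mul_le_mul_of_nonneg_left (one_le_pow₀ (n := 2) ht) hL]
    _ = gaussianPDFReal 0 1 (t + 1) := by
        rw [gaussianPDFReal_zero_one, exp_sub, exp_log (by positivity), div_eq_inv_mul]
    _ ≤ ∫ x in Ioc t (t + 1), gaussianPDFReal 0 1 x := hIoc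
    _ ≤ (gaussianReal 0 1).real (Ioi t) := by
        rw [← gaussianReal_real_apply 0 one_ne_zero]
        exact measureReal_mono Ioc_subset_Ioi_self

end GaussianTail

section ProductTail

variable {Ω : Type*} [MeasurableSpace Ω] {P : Measure Ω} {R Z : Ω → ℝ} {s t : ℝ}

lemma ProbabilityTheory.IndepFun.measureReal_lt_mul_measureReal_lt_le [IsFiniteMeasure P]
    (hRZ : IndepFun R Z P) (hs : 0 ≤ s) (ht : 0 ≤ t) :
    P.real {ω | s < R ω} * P.real {ω | t < Z ω} ≤ P.real {ω | s * t < R ω * Z ω} := by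
  have hinter := hRZ.measure_inter_preimage_eq_mul (Ioi s) (Ioi t) measurableSet_Ioi
    measurableSet_Ioi
  calc P.real {ω | s < R ω} * P.real {ω | t < Z ω}
      = P.real ({ω | s < R ω} ∩ {ω | t < Z ω}) := by
        simp only [measureReal_def, ← ENNReal.toReal_mul]
        exact congrArg ENNReal.toReal hinter.symm
    _ ≤ P.real {ω | s * t < R ω * Z ω} :=
        measureReal_mono fun ω ⟨hRω, hZω⟩ => mul_lt_mul'' hRω hZω hs ht

lemma ae_lt_of_measureReal_eq_one [IsProbabilityMeasure P] (hR : Measurable R) {a : ℝ}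
    (h : P.real {ω | a < R ω} = 1) : ∀ᵐ ω ∂P, a < R ω := by
  rw [ae_iff_measure_eq (measurableSet_lt measurable_const hR).nullMeasurableSet, measure_univ,
    ← ENNReal.toReal_eq_one_iff]
  exact h

lemma measureReal_mul_lt_le_add [IsFiniteMeasure P] (hR : ∀ᵐ ω ∂P, 0 ≤ R ω) (ht : 0 ≤ t) :
    P.real {ω | s * t < R ω * Z ω} ≤ P.real {ω | s < R ω} + P.real {ω | t < Z ω} := by
  have hsub : {ω | s * t < R ω * Z ω} ≤ᵐ[P] ({ω | s < R ω} ∪ {ω | t < Z ω} : Set Ω) := by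
    filter_upwards [hR] with ω hRω (hst : s * t < R ω * Z ω)
    show s < R ω ∨ t < Z ω
    by_contra! h
    exact ((mul_le_mul_of_nonneg_left h.2 hRω).trans
      (mul_le_mul_of_nonneg_right h.1 ht)).not_gt hst
  calc P.real {ω | s * t < R ω * Z ω} ≤ P.real ({ω | s < R ω} ∪ {ω | t < Z ω}) :=
        ENNReal.toReal_mono (measure_ne_top _ _) (measure_mono_ae hsub)
    _ ≤ _ := measureReal_union_le _ _

end ProductTail

lemma tendsto_log_div_log_of_rpow_bounds {g : ℝ → ℝ} {α c C : ℝ} (hc : 0 < c) (hC : 0 < C)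
    (hlow : ∀ᶠ x in atTop, c * x ^ α ≤ g x) (hup : ∀ᶠ x in atTop, g x ≤ C * x ^ α) :
    Tendsto (fun x => log (g x) / log x) atTop (𝓝 α) := by
  have hlim (K : ℝ) (hK : 0 < K) : Tendsto (fun x => log (K * x ^ α) / log x) atTop (𝓝 α) := by
    have h := ((tendsto_const_nhds (x := log K)).div_atTop tendsto_log_atTop).add_const α
    rw [zero_add] at h
    refine h.congr' ?_
    filter_upwards [eventually_gt_atTop 1] with x hx
    have hx0 : 0 < x := zero_lt_one.trans hx
    rw [log_mul hK.ne' (rpow_pos_of_pos hx0 α).ne', log_rpow hx0]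
    field_simp [(log_pos hx).ne']
  refine tendsto_of_tendsto_of_tendsto_of_le_of_le' (hlim c hc) (hlim C hC) ?_ ?_
  all_goals filter_upwards [eventually_gt_atTop 1, hlow, hup] with x hx hlowx hupx
  all_goals refine div_le_div_of_nonneg_right ?_ (log_pos hx).le
  all_goals have hcx : 0 < c * x ^ α := mul_pos hc (rpow_pos_of_pos (zero_lt_one.trans hx) α)
  · exact log_le_log hcx hlowx
  · exact log_le_log (hcx.trans_le hlowx) hupx

lemma tendsto_log_neg_log_div_log_of_exp_bounds {f : ℝ → ℝ} {α c C k : ℝ} (hα : 0 < α)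
    (hc : 0 < c) (hC : 0 < C) (hlow : ∀ᶠ x in atTop, exp (-(C * x ^ α)) ≤ f x)
    (hup : ∀ᶠ x in atTop, f x ≤ exp (k - c * x ^ α)) :
    Tendsto (fun x => log (-log (f x)) / log x) atTop (𝓝 α) := by
  refine tendsto_log_div_log_of_rpow_bounds (half_pos hc) hC ?_ ?_
  · filter_upwards [hlow, hup, (tendsto_rpow_atTop hα).eventually_ge_atTop (2 * k / c)]
      with x hlowx hupx hx
    have hlogf := log_le_log (exp_pos _ |>.trans_le hlowx) hupx
    rw [log_exp] at hlogf
    rw [div_le_iff₀ hc] at hx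
    linarith
  · filter_upwards [hlow] with x hlowx
    have hlogf := log_le_log (exp_pos _) hlowx
    rw [log_exp] at hlogf
    linarith

lemma exists_mul_eq_rpow_eq_sq_eq {x β : ℝ} (hx : 1 ≤ x) (hβ : 0 < β) :
    ∃ s t : ℝ, 1 ≤ s ∧ 1 ≤ t ∧ s * t = x ∧
      s ^ β = x ^ (2 * β / (β + 2)) ∧ t ^ 2 = x ^ (2 * β / (β + 2)) := by
  have hx0 : 0 < x := zero_lt_one.trans_le hx
  have hβ2 : β + 2 ≠ 0 := by positivity
  refine ⟨x ^ (2 / (β + 2)), x ^ (β / (β + 2)), one_le_rpow hx (by positivity),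
    one_le_rpow hx (by positivity), ?_, ?_, ?_⟩
  · rw [← rpow_add hx0, ← add_div, add_comm, div_self hβ2, rpow_one]
  · rw [← rpow_mul hx0.le]
    ring_nf
  · rw [← rpow_natCast, ← rpow_mul hx0.le]
    ring_nf

section WeibullGaussian

variable {Ω : Type*} [MeasurableSpace Ω] {P : Measure Ω} [IsFiniteMeasure P] {R Z : Ω → ℝ}
  {β γ x : ℝ}

lemma exp_le_measureReal_lt_mul (hβ : 0 < β) (hγ : 0 ≤ γ)
    (hRtail : ∀ s : ℝ, 1 ≤ s → P.real {ω | s < R ω} = exp (-γ * (s ^ β - 1) / β))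
    (hZtail : ∀ t : ℝ, P.real {ω | t < Z ω} = (gaussianReal 0 1).real (Ioi t))
    (hRZ : IndepFun R Z P) (hx : 1 ≤ x) :
    exp (-((γ / β + (2 + log √(2 * π))) * x ^ (2 * β / (β + 2)))) ≤
      P.real {ω | x < R ω * Z ω} := by
  obtain ⟨s, t, hs, ht, rfl, hsβ, ht2⟩ := exists_mul_eq_rpow_eq_sq_eq hx hβ
  calc exp (-((γ / β + (2 + log √(2 * π))) * (s * t) ^ (2 * β / (β + 2))))
      = exp (-γ * (s ^ β - 1) / β - γ / β) * exp (-((2 + log √(2 * π)) * t ^ 2)) := by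
        rw [← exp_add, hsβ, ht2]
        congr 1
        ring
    _ ≤ P.real {ω | s < R ω} * P.real {ω | t < Z ω} := by
        rw [hRtail s hs, hZtail]
        gcongr
        · linarith [div_nonneg hγ hβ.le]
        · exact exp_neg_mul_sq_le_gaussianReal_real_Ioi ht
    _ ≤ P.real {ω | s * t < R ω * Z ω} :=
        hRZ.measureReal_lt_mul_measureReal_lt_le (by linarith) (by linarith)

lemma measureReal_lt_mul_le_exp (hβ : 0 < β) (hγ : 0 ≤ γ)
    (hRtail : ∀ s : ℝ, 1 ≤ s → P.real {ω | s < R ω} = exp (-γ * (s ^ β - 1) / β))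
    (hZtail : ∀ t : ℝ, P.real {ω | t < Z ω} = (gaussianReal 0 1).real (Ioi t))
    (hR : ∀ᵐ ω ∂P, 0 ≤ R ω) (hx : 1 ≤ x) :
    P.real {ω | x < R ω * Z ω} ≤
      exp (log 2 + γ / β - min (γ / β) (1 / 2) * x ^ (2 * β / (β + 2))) := by
  obtain ⟨s, t, hs, ht, rfl, hsβ, ht2⟩ := exists_mul_eq_rpow_eq_sq_eq hx hβ
  set X := (s * t) ^ (2 * β / (β + 2))
  have hX : 0 ≤ X := by positivity
  have hγβ : 0 ≤ γ / β := div_nonneg hγ hβ.le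
  calc P.real {ω | s * t < R ω * Z ω} ≤ P.real {ω | s < R ω} + P.real {ω | t < Z ω} :=
        measureReal_mul_lt_le_add hR (by linarith)
    _ ≤ exp (γ / β - min (γ / β) (1 / 2) * X) + exp (γ / β - min (γ / β) (1 / 2) * X) := by
        rw [hRtail s hs, hZtail]
        gcongr
        · rw [hsβ, show -γ * (X - 1) / β = γ / β - γ / β * X by field_simp; ring]
          gcongr
          exact min_le_left _ _
        · refine (gaussianReal_real_Ioi_le_exp ht).trans (exp_le_exp.2 ?_)
          nlinarith [min_le_right (γ / β) (1 / 2)]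
    _ = exp (log 2 + γ / β - min (γ / β) (1 / 2) * X) := by
        rw [add_sub_assoc, exp_add, exp_log two_pos]
        ring

end WeibullGaussian

/-- If `R` is Weibull-type(β,γ) with β > 0, γ > 0, and `Z` is standard
normal and independent of `R`, then `log(-log P(R·Z > x)) / log x → 2β/(β+2)` as `x → ∞`;
that is, `R·Z` is Weibull-tailed with tail index `2β/(2+β)`. -/
theorem weibull_gaussian_mixture_tail_index
    {Ω : Type*} [MeasurableSpace Ω] (P : Measure Ω) [IsProbabilityMeasure P]
    (β γ : ℝ) (hβ : 0 < β) (hγ : 0 < γ) (R Z : Ω → ℝ)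
    (hRmeas : Measurable R) (hZmeas : Measurable Z)
    (hRtail : ∀ x : ℝ, 1 ≤ x → (P {ω | x < R ω}).toReal = Real.exp (-γ * (x ^ β - 1) / β))
    (hRlow : ∀ x : ℝ, x < 1 → (P {ω | x < R ω}).toReal = 1)
    (hZ : Measure.map Z P = gaussianReal 0 1)
    (hindep : IndepFun R Z P) :
    Tendsto (fun x : ℝ =>
        Real.log (-Real.log ((P {ω | x < R ω * Z ω}).toReal)) / Real.log x)
      atTop (nhds (2 * β / (β + 2))) := by
  have hRpos : ∀ᵐ ω ∂P, 0 ≤ R ω :=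
    (ae_lt_of_measureReal_eq_one hRmeas (hRlow 0 zero_lt_one)).mono fun _ h => h.le
  have hZtail (t : ℝ) : P.real {ω | t < Z ω} = (gaussianReal 0 1).real (Ioi t) := by
    rw [← hZ, map_measureReal_apply hZmeas measurableSet_Ioi]
    rfl
  have hγβ : 0 < γ / β := div_pos hγ hβ
  refine tendsto_log_neg_log_div_log_of_exp_bounds (C := γ / β + (2 + log √(2 * π)))
    (k := log 2 + γ / β) (by positivity) (lt_min hγβ one_half_pos)
    (add_pos hγβ (by linarith [log_nonneg one_le_sqrt_two_mul_pi])) ?_ ?_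
  · filter_upwards [eventually_ge_atTop 1] with x hx
      using exp_le_measureReal_lt_mul hβ hγ.le hRtail hZtail hindep hx
  · filter_upwards [eventually_ge_atTop 1] with x hx
      using measureReal_lt_mul_le_exp hβ hγ.le hRtail hZtail hRpos hx
end

section
/- Let Z_1 and Z_0 be independent standard normal random variables and, for ρ ∈ (−1, 1), set Z_2 = ρ Z_1 + √(1 − ρ²) Z_0, so that (Z_1, Z_2) is bivariate standard Gaussian with correlation ρ. Let β > 0, γ > 0, let R be a Weibull-type(β,γ) random variable independent of (Z_1, Z_0), and set W_i = R·Z_i for i = 1, 2. Then lim_{x→∞} P(W_1 > x and W_2 > x) / P(W_2 > x) = 0; that is, the pair (W_1, W_2) is asymptotically independent (χ = 0). -/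
/-!
On `{W₁ > x, W₂ > x}` we have `R S > x` for `S = (Z₁ + Z₂) / 2 ~ N(0, (1 + ρ) / 2)`, while
`W₂ = R Z₂` with `Z₂ ~ N(0, 1)`. For `R` of Weibull type and an independent `S ~ N(0, v)`, the
event `R S > x` essentially requires `R ≈ u x^(2/(β+2))` and `S ≈ x^(β/(β+2)) / u` for some `u`,
so `log P(R S > x) ~ -D(v) x^(2β/(β+2))` with `D(v) = min_u (γ u^β / β + 1 / (2 v u²))`.
The upper bound sums Chernoff bounds over a geometric grid of values of `u`, the lower bound
uses a single `u`. Since `D` is strictly decreasing in `v` and `(1 + ρ) / 2 < 1`, the ratio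
decays like `exp (-c x^(2β/(β+2)))`.
-/

open MeasureTheory ProbabilityTheory Filter Real Set Topology
open scoped NNReal

lemma rpow_two_div_add_two_mul_rpow_div_add_two {β x : ℝ} (hβ : β + 2 ≠ 0) (hx : 0 < x) :
    x ^ (2 / (β + 2)) * x ^ (β / (β + 2)) = x := by
  rw [← rpow_add hx, ← add_div, add_comm, div_self hβ, rpow_one]

lemma rpow_two_div_add_two_rpow {β x : ℝ} (hx : 0 ≤ x) :
    (x ^ (2 / (β + 2))) ^ β = (x ^ (β / (β + 2))) ^ 2 := by
  rw [← rpow_mul hx, ← rpow_mul_natCast hx]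
  congr 1
  push_cast
  ring

lemma exists_forall_rpow_add_div_sq_le {a c β : ℝ} (ha : 0 < a) (hc : 0 < c) (hβ : 0 < β) :
    ∃ u₀ > 0, ∀ u > 0, a * u₀ ^ β + c / u₀ ^ 2 ≤ a * u ^ β + c / u ^ 2 := by
  set g : ℝ → ℝ := fun t => a * exp (β * t) + c * exp (-(2 * t))
  have hg : ∀ t, g t = a * exp t ^ β + c / exp t ^ 2 := fun t => by
    rw [← exp_mul, ← exp_nat_mul, div_eq_mul_inv, ← exp_neg]
    simp only [g]
    ring_nf
  have hlim : Tendsto g (cocompact ℝ) atTop := by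
    rw [cocompact_eq_atBot_atTop]
    refine Tendsto.sup (Tendsto.nonneg_add_atTop (fun t => by positivity) ?_)
      (Tendsto.atTop_add_nonneg ?_ (fun t => by positivity))
    · exact (tendsto_exp_atTop.comp (tendsto_neg_atBot_atTop.comp
        (tendsto_id.const_mul_atBot two_pos))).const_mul_atTop hc
    · exact (tendsto_exp_atTop.comp (tendsto_id.const_mul_atTop hβ)).const_mul_atTop ha
  obtain ⟨t₀, ht₀⟩ := (by fun_prop : Continuous g).exists_forall_le hlim
  refine ⟨exp t₀, exp_pos t₀, fun u hu => ?_⟩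
  simpa only [hg, exp_log hu] using ht₀ (log u)

lemma exists_geometric_grid {a c β ℓ m : ℝ} (ha : 0 < a) (hc : 0 < c) (hβ : 0 < β) (hℓ : 0 < ℓ)
    (hℓm : ℓ < m) (hm : ∀ u > 0, m ≤ a * u ^ β + c / u ^ 2) :
    ∃ (n : ℕ) (U : ℕ → ℝ), (∀ k, 0 < U k) ∧ ℓ ≤ c / U 0 ^ 2 ∧
      (∀ k, ℓ ≤ a * U k ^ β + c / U (k + 1) ^ 2) ∧ ℓ ≤ a * U n ^ β := by
  have hmℓ : 1 < m / ℓ := (one_lt_div hℓ).2 hℓm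
  set q := (m / ℓ) ^ β⁻¹
  have hq : 1 < q := one_lt_rpow hmℓ (by positivity)
  have hqβ : q ^ β = m / ℓ := rpow_inv_rpow (by linarith) hβ.ne'
  set U : ℕ → ℝ := fun k => √(c / ℓ) * q ^ k
  have hU : ∀ k, 0 < U k := fun k =>
    mul_pos (sqrt_pos.2 (div_pos hc hℓ)) (pow_pos (by linarith) k)
  have hU₀ : c / U 0 ^ 2 = ℓ := by
    simp only [U, pow_zero, mul_one, sq_sqrt (div_pos hc hℓ).le]
    field_simp
  have hstep : ∀ k, a * U (k + 1) ^ β = m / ℓ * (a * U k ^ β) := fun k => by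
    rw [show U (k + 1) = U k * q by simp only [U]; ring, mul_rpow (hU k).le (by positivity), hqβ]
    ring
  have hmid : ∀ k, ℓ ≤ a * U k ^ β + c / U (k + 1) ^ 2 := fun k => by
    have h := hm _ (hU (k + 1))
    rw [hstep] at h
    have : c / U (k + 1) ^ 2 ≤ m / ℓ * (c / U (k + 1) ^ 2) :=
      le_mul_of_one_le_left (by positivity) hmℓ.le
    refine le_of_mul_le_mul_left ?_ (one_pos.trans hmℓ)
    rw [div_mul_cancel₀ _ hℓ.ne']
    linarith
  have hUlim : Tendsto (fun k => a * U k ^ β) atTop atTop :=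
    ((tendsto_rpow_atTop hβ).comp ((tendsto_pow_atTop_atTop_of_one_lt hq).const_mul_atTop
      (by positivity))).const_mul_atTop ha
  obtain ⟨n, hn⟩ := (hUlim.eventually_ge_atTop ℓ).exists
  exact ⟨n, U, hU, hU₀.ge, hmid, hn⟩

lemma exists_lt_le_succ {f : ℕ → ℝ} {r : ℝ} :
    ∀ {n : ℕ}, f 0 < r → r ≤ f n → ∃ k < n, f k < r ∧ r ≤ f (k + 1)
  | 0, h0, hn => absurd h0 hn.not_gt
  | n + 1, h0, hn => by
    rcases le_or_gt r (f n) with h | h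
    · obtain ⟨k, hk, hfk⟩ := exists_lt_le_succ h0 h
      exact ⟨k, hk.trans n.lt_succ_self, hfk⟩
    · exact ⟨n, n.lt_succ_self, h, hn⟩

lemma div_le_or_exists_or_lt_of_lt_mul (t : ℕ → ℝ) (n : ℕ) {y r s : ℝ} (hy : 0 ≤ y) (hr : 0 < r)
    (h : y < r * s) :
    y / t 0 ≤ s ∨ (∃ k < n, t k < r ∧ y / t (k + 1) ≤ s) ∨ t n < r := by
  have hs : ∀ k, r ≤ t k → y / t k ≤ s := fun k hk =>
    (div_le_div_of_nonneg_left hy hr hk).trans ((div_lt_iff₀' hr).2 h).le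
  rcases le_or_gt r (t 0) with h0 | h0
  · exact Or.inl (hs 0 h0)
  rcases le_or_gt r (t n) with hn | hn
  · obtain ⟨k, hk, hlt, hle⟩ := exists_lt_le_succ (f := t) h0 hn
    exact Or.inr (Or.inl ⟨k, hk, hlt, hs _ hle⟩)
  · exact Or.inr (Or.inr hn)

lemma tendsto_div_of_le_exp_of_exp_le {f g φ : ℝ → ℝ} {K K' ℓ₁ ℓ₂ : ℝ} (hK' : 0 < K')
    (hℓ : ℓ₁ < ℓ₂) (hφ : Tendsto φ atTop atTop) (hf₀ : ∀ x, 0 ≤ f x)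
    (hf : ∀ᶠ x in atTop, f x ≤ K * exp (-(ℓ₂ * φ x)))
    (hg : ∀ᶠ x in atTop, K' * exp (-(ℓ₁ * φ x)) ≤ g x) :
    Tendsto (fun x => f x / g x) atTop (𝓝 0) := by
  have hlim : Tendsto (fun x => K / K' * exp (-((ℓ₂ - ℓ₁) * φ x))) atTop (𝓝 0) := by
    simpa using (tendsto_exp_neg_atTop_nhds_zero.comp
      (hφ.const_mul_atTop (sub_pos.2 hℓ))).const_mul (K / K')
  refine tendsto_of_tendsto_of_tendsto_of_le_of_le' tendsto_const_nhds hlim ?_ ?_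
  · filter_upwards [hg] with x hx
    exact div_nonneg (hf₀ x) ((by positivity : 0 ≤ K' * exp _).trans hx)
  · filter_upwards [hf, hg] with x hfx hgx
    calc f x / g x ≤ K * exp (-(ℓ₂ * φ x)) / (K' * exp (-(ℓ₁ * φ x))) :=
          div_le_div₀ ((hf₀ x).trans hfx) hfx (by positivity) hgx
      _ = K / K' * exp (-((ℓ₂ - ℓ₁) * φ x)) := by
          rw [mul_div_mul_comm, ← exp_sub]
          ring_nf

section Probability

variable {Ω : Type*} [MeasurableSpace Ω] {P : Measure Ω}

lemma ProbabilityTheory.IndepFun.measureReal_inter_preimage_eq_mul {α β : Type*}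
    [MeasurableSpace α] [MeasurableSpace β] {X : Ω → α} {Y : Ω → β} (hXY : IndepFun X Y P)
    (s : Set α) (t : Set β) (hs : MeasurableSet s) (ht : MeasurableSet t) :
    P.real (X ⁻¹' s ∩ Y ⁻¹' t) = P.real (X ⁻¹' s) * P.real (Y ⁻¹' t) := by
  rw [measureReal_def, hXY.measure_inter_preimage_eq_mul s t hs ht, ENNReal.toReal_mul]
  rfl

lemma map_add_eq_gaussianReal {X Y : Ω → ℝ} (hXY : IndepFun X Y P)
    (hX : P.map X = gaussianReal 0 1) (hY : P.map Y = gaussianReal 0 1) {a b : ℝ} {v : ℝ≥0}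
    (hv : (v : ℝ) = a ^ 2 + b ^ 2) :
    P.map (fun ω => a * X ω + b * Y ω) = gaussianReal 0 v := by
  have hlaw : ∀ {Z : Ω → ℝ}, P.map Z = gaussianReal 0 1 → HasLaw Z (gaussianReal 0 1) P :=
    fun hZ => ⟨aemeasurable_of_map_neZero (by rw [hZ]; infer_instance), hZ⟩
  convert gaussianReal_add_gaussianReal_of_indepFun
    (hXY.comp (measurable_const_mul a) (measurable_const_mul b))
    (gaussianReal_const_mul (hlaw hX) a).map_eq (gaussianReal_const_mul (hlaw hY) b).map_eq
    using 2
  · rfl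
  · simp
  · rw [← NNReal.coe_inj]
    simp [hv]

lemma measureReal_ge_le_of_map_eq_gaussianReal {X : Ω → ℝ} {v : ℝ≥0}
    (hX : P.map X = gaussianReal 0 v) {s : ℝ} (hs : 0 ≤ s) :
    P.real {ω | s ≤ X ω} ≤ exp (-s ^ 2 / (2 * v)) := by
  have hXm : AEMeasurable X P := aemeasurable_of_map_neZero (by rw [hX]; infer_instance)
  refine HasSubgaussianMGF.measure_ge_le ((HasSubgaussianMGF.id_map_iff hXm).1 ?_) hs
  rw [hX]
  exact ⟨fun t => integrable_exp_mul_gaussianReal t, fun t => by simp [mgf_id_gaussianReal]⟩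

lemma exp_div_sqrt_le_gaussianReal_Ioi {w : ℝ} (hw : 0 ≤ w) :
    exp (-(w + 1) ^ 2 / 2) / √(2 * π) ≤ (gaussianReal 0 1).real (Ioi w) := by
  have hpdf : ∀ x ∈ Ioc w (w + 1),
      exp (-(w + 1) ^ 2 / 2) / √(2 * π) ≤ gaussianPDFReal 0 1 x := by
    rintro x ⟨hwx, hxw⟩
    simp only [gaussianPDFReal, NNReal.coe_one, mul_one, sub_zero, ← div_eq_inv_mul]
    gcongr exp ?_ / _
    nlinarith
  calc exp (-(w + 1) ^ 2 / 2) / √(2 * π)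
      = ∫ _ in Ioc w (w + 1), exp (-(w + 1) ^ 2 / 2) / √(2 * π) := by simp
    _ ≤ ∫ x in Ioc w (w + 1), gaussianPDFReal 0 1 x :=
        setIntegral_mono_on (by simp) (integrable_gaussianPDFReal 0 1).integrableOn
          measurableSet_Ioc hpdf
    _ = (gaussianReal 0 1).real (Ioc w (w + 1)) := by
        rw [measureReal_def, gaussianReal_apply_eq_integral 0 one_ne_zero,
          ENNReal.toReal_ofReal (setIntegral_nonneg measurableSet_Ioc
            fun x _ => gaussianPDFReal_nonneg 0 1 x)]
    _ ≤ (gaussianReal 0 1).real (Ioi w) := measureReal_mono Ioc_subset_Ioi_self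

section ProductTail

variable [IsFiniteMeasure P] {R S : Ω → ℝ}

lemma measureReal_lt_mul_le_grid_sum (hRS : IndepFun R S P) (hR : ∀ᵐ ω ∂P, 0 < R ω)
    (t : ℕ → ℝ) (n : ℕ) {y : ℝ} (hy : 0 ≤ y) :
    P.real {ω | y < R ω * S ω} ≤ P.real {ω | y / t 0 ≤ S ω}
      + ∑ k ∈ Finset.range n, P.real {ω | t k < R ω} * P.real {ω | y / t (k + 1) ≤ S ω}
      + P.real {ω | t n < R ω} := by
  set A : ℕ → Set Ω := fun k => {ω | t k < R ω}
  set B : ℕ → Set Ω := fun k => {ω | y / t k ≤ S ω}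
  have hcover : {ω | y < R ω * S ω}
      ≤ᵐ[P] (B 0 ∪ (⋃ k ∈ Finset.range n, A k ∩ B (k + 1)) ∪ A n : Set Ω) := by
    filter_upwards [hR] with ω hω hmem
    rcases div_le_or_exists_or_lt_of_lt_mul t n hy hω hmem with h | ⟨k, hk, hA, hB⟩ | h
    · exact Or.inl (Or.inl h)
    · exact Or.inl (Or.inr (mem_biUnion (Finset.mem_range.2 hk) ⟨hA, hB⟩))
    · exact Or.inr h
  have hindep : ∀ k, P.real (A k ∩ B (k + 1)) = P.real (A k) * P.real (B (k + 1)) := fun k =>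
    hRS.measureReal_inter_preimage_eq_mul _ _ measurableSet_Ioi measurableSet_Ici
  calc P.real {ω | y < R ω * S ω}
      ≤ P.real (B 0 ∪ (⋃ k ∈ Finset.range n, A k ∩ B (k + 1)) ∪ A n) :=
        ENNReal.toReal_mono (measure_ne_top _ _) (measure_mono_ae hcover)
    _ ≤ P.real (B 0) + P.real (⋃ k ∈ Finset.range n, A k ∩ B (k + 1)) + P.real (A n) :=
        (measureReal_union_le _ _).trans (by gcongr; exact measureReal_union_le _ _)
    _ ≤ _ := by
        gcongr
        exact (measureReal_biUnion_finset_le _ _).trans_eq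
          (Finset.sum_congr rfl fun k _ => hindep k)

theorem exists_measureReal_lt_mul_le_exp (hRS : IndepFun R S P) (hR : ∀ᵐ ω ∂P, 0 < R ω)
    {a c β C ℓ m : ℝ} (ha : 0 < a) (hc : 0 < c) (hβ : 0 < β) (hC : 1 ≤ C) (hℓ : 0 < ℓ)
    (hℓm : ℓ < m) (hm : ∀ u > 0, m ≤ a * u ^ β + c / u ^ 2)
    (hRtail : ∀ y, 0 ≤ y → P.real {ω | y < R ω} ≤ C * exp (-(a * y ^ β)))
    (hStail : ∀ s, 0 ≤ s → P.real {ω | s ≤ S ω} ≤ exp (-(c * s ^ 2))) :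
    ∃ K, ∀ x > 0, P.real {ω | x < R ω * S ω} ≤ K * exp (-(ℓ * (x ^ (β / (β + 2))) ^ 2)) := by
  obtain ⟨n, U, hU, h₀, hmid, hn⟩ := exists_geometric_grid ha hc hβ hℓ hℓm hm
  refine ⟨(n + 2) * C, fun x hx => ?_⟩
  set w := x ^ (2 / (β + 2))
  set p := x ^ (β / (β + 2))
  have hw : 0 < w := rpow_pos_of_pos hx _
  have hxwp : x = w * p := (rpow_two_div_add_two_mul_rpow_div_add_two (by positivity) hx).symm
  have hRk : ∀ k, P.real {ω | U k * w < R ω} ≤ C * exp (-(a * U k ^ β * p ^ 2)) := fun k => by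
    have := hRtail _ (mul_pos (hU k) hw).le
    rwa [mul_rpow (hU k).le hw.le, rpow_two_div_add_two_rpow hx.le, ← mul_assoc] at this
  have hSk : ∀ k, P.real {ω | x / (U k * w) ≤ S ω} ≤ exp (-(c / U k ^ 2 * p ^ 2)) := fun k => by
    have hscale : c * (x / (U k * w)) ^ 2 = c / U k ^ 2 * p ^ 2 := by
      rw [hxwp]
      field_simp [(hU k).ne', hw.ne']
    rw [← hscale]
    exact hStail _ (div_nonneg hx.le (mul_pos (hU k) hw).le)
  calc P.real {ω | x < R ω * S ω}
      ≤ P.real {ω | x / (U 0 * w) ≤ S ω}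
        + ∑ k ∈ Finset.range n,
            P.real {ω | U k * w < R ω} * P.real {ω | x / (U (k + 1) * w) ≤ S ω}
        + P.real {ω | U n * w < R ω} :=
        measureReal_lt_mul_le_grid_sum hRS hR (fun k => U k * w) n hx.le
    _ ≤ C * exp (-(ℓ * p ^ 2)) + ∑ k ∈ Finset.range n, C * exp (-(ℓ * p ^ 2))
        + C * exp (-(ℓ * p ^ 2)) := by
        gcongr ?_ + ∑ k ∈ _, ?_ + ?_ with k
        · exact (hSk 0).trans ((by gcongr : _ ≤ exp (-(ℓ * p ^ 2))).trans
            (le_mul_of_one_le_left (exp_pos _).le hC))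
        · calc P.real {ω | U k * w < R ω} * P.real {ω | x / (U (k + 1) * w) ≤ S ω}
              ≤ C * exp (-(a * U k ^ β * p ^ 2)) * exp (-(c / U (k + 1) ^ 2 * p ^ 2)) :=
                mul_le_mul (hRk k) (hSk (k + 1)) measureReal_nonneg (by positivity)
            _ = C * exp (-((a * U k ^ β + c / U (k + 1) ^ 2) * p ^ 2)) := by
                rw [mul_assoc, ← exp_add]
                ring_nf
            _ ≤ C * exp (-(ℓ * p ^ 2)) := by gcongr; exact hmid k
        · exact (hRk n).trans (by gcongr)
    _ = (n + 2) * C * exp (-(ℓ * p ^ 2)) := by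
        rw [Finset.sum_const, Finset.card_range, nsmul_eq_mul]
        ring

theorem exists_exp_le_measureReal_lt_mul {Z : Ω → ℝ} (hRZ : IndepFun R Z P)
    (hZ : P.map Z = gaussianReal 0 1) {a β C u ℓ : ℝ} (hβ : 0 < β) (hC : 0 < C) (hu : 0 < u)
    (hℓ : a * u ^ β + 1 / (2 * u ^ 2) < ℓ)
    (hRtail : ∀ y, 1 ≤ y → C * exp (-(a * y ^ β)) ≤ P.real {ω | y < R ω}) :
    ∃ K > 0, ∀ᶠ x in atTop,
      K * exp (-(ℓ * (x ^ (β / (β + 2))) ^ 2)) ≤ P.real {ω | x < R ω * Z ω} := by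
  set ε := ℓ - (a * u ^ β + 1 / (2 * u ^ 2))
  have hε : 0 < ε := sub_pos.2 hℓ
  have hZm : AEMeasurable Z P := aemeasurable_of_map_neZero (by rw [hZ]; infer_instance)
  refine ⟨C * exp (-(1 / 2)) / √(2 * π), by positivity, ?_⟩
  have hw : ∀ᶠ x in atTop, 1 ≤ u * x ^ (2 / (β + 2)) :=
    ((tendsto_rpow_atTop (by positivity)).const_mul_atTop hu).eventually_ge_atTop 1
  have hp' : ∀ᶠ x in atTop, 1 / (u * ε) ≤ x ^ (β / (β + 2)) :=
    (tendsto_rpow_atTop (by positivity)).eventually_ge_atTop _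
  filter_upwards [eventually_gt_atTop 0, hw, hp'] with x hx hwx hpx
  set w := x ^ (2 / (β + 2))
  set p := x ^ (β / (β + 2))
  have hxwp : x = w * p := (rpow_two_div_add_two_mul_rpow_div_add_two (by positivity) hx).symm
  have hw0 : 0 < w := rpow_pos_of_pos hx _
  have hp : 0 < p := rpow_pos_of_pos hx _
  have hRw : (u * w) ^ β = u ^ β * p ^ 2 := by
    rw [mul_rpow hu.le hw0.le, rpow_two_div_add_two_rpow hx.le]
  -- the linear term `p / u` of the Gaussian exponent is absorbed by the margin `ε`
  have hlin : p / u ≤ ε * p ^ 2 := by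
    rw [div_le_iff₀ (mul_pos hu hε)] at hpx
    rw [div_le_iff₀ hu]
    nlinarith
  have hsub : {ω | u * w < R ω} ∩ {ω | p / u < Z ω} ⊆ {ω | x < R ω * Z ω} := by
    rintro ω ⟨hRω, hZω⟩
    change x < R ω * Z ω
    rw [hxwp, show w * p = u * w * (p / u) by field_simp]
    exact mul_lt_mul'' hRω hZω (by positivity) (by positivity)
  have hZtail : (gaussianReal 0 1).real (Ioi (p / u)) = P.real {ω | p / u < Z ω} := by
    rw [← hZ, map_measureReal_apply_of_aemeasurable hZm measurableSet_Ioi]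
    rfl
  calc C * exp (-(1 / 2)) / √(2 * π) * exp (-(ℓ * p ^ 2))
      = C * exp (-(ℓ * p ^ 2) + -(1 / 2)) / √(2 * π) := by rw [exp_add]; ring
    _ ≤ C * exp (-(a * (u * w) ^ β) + -(p / u + 1) ^ 2 / 2) / √(2 * π) := by
        gcongr C * exp ?_ / _
        rw [hRw]
        linear_combination hlin
    _ = C * exp (-(a * (u * w) ^ β)) * (exp (-(p / u + 1) ^ 2 / 2) / √(2 * π)) := by
        rw [exp_add]; ring
    _ ≤ P.real {ω | u * w < R ω} * P.real {ω | p / u < Z ω} :=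
        mul_le_mul (hRtail _ hwx) (hZtail ▸ exp_div_sqrt_le_gaussianReal_Ioi (by positivity))
          (by positivity) measureReal_nonneg
    _ = P.real ({ω | u * w < R ω} ∩ {ω | p / u < Z ω}) :=
        (hRZ.measureReal_inter_preimage_eq_mul _ _ measurableSet_Ioi measurableSet_Ioi).symm
    _ ≤ P.real {ω | x < R ω * Z ω} := measureReal_mono hsub

end ProductTail

section Weibull

variable {R : Ω → ℝ} {β γ : ℝ}

structure IsWeibullType (P : Measure Ω) (R : Ω → ℝ) (β γ : ℝ) : Prop where
  measureReal_lt_of_one_le : ∀ x, 1 ≤ x → P.real {ω | x < R ω} = exp (-γ * (x ^ β - 1) / β)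
  measureReal_lt_of_lt_one : ∀ x < 1, P.real {ω | x < R ω} = 1

namespace IsWeibullType

lemma ae_pos [IsProbabilityMeasure P] (hR : IsWeibullType P R β γ) (hRm : Measurable R) :
    ∀ᵐ ω ∂P, 0 < R ω := by
  rw [ae_iff]
  exact (prob_compl_eq_zero_iff (measurableSet_lt measurable_const hRm)).2
    ((ENNReal.toReal_eq_one_iff _).1 (hR.measureReal_lt_of_lt_one 0 one_pos))

lemma measureReal_lt_eq (hR : IsWeibullType P R β γ) {y : ℝ} (hy : 1 ≤ y) :
    P.real {ω | y < R ω} = exp (γ / β) * exp (-(γ / β * y ^ β)) := by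
  rw [hR.measureReal_lt_of_one_le y hy, ← exp_add]
  ring_nf

lemma measureReal_lt_le (hR : IsWeibullType P R β γ) (hβ : 0 ≤ β) (hγ : 0 ≤ γ) {y : ℝ}
    (hy : 0 ≤ y) : P.real {ω | y < R ω} ≤ exp (γ / β) * exp (-(γ / β * y ^ β)) := by
  rcases le_or_gt 1 y with h1 | h1
  · exact (hR.measureReal_lt_eq h1).le
  · rw [hR.measureReal_lt_of_lt_one y h1, ← exp_add]
    refine one_le_exp ?_
    have : γ / β * y ^ β ≤ γ / β :=
      mul_le_of_le_one_right (by positivity) (rpow_le_one hy h1.le hβ)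
    linarith

end IsWeibullType

end Weibull

theorem tendsto_measureReal_lt_mul_div_measureReal_lt_mul [IsProbabilityMeasure P]
    {R S Z : Ω → ℝ} {β γ : ℝ} {v : ℝ≥0} (hβ : 0 < β) (hγ : 0 < γ) (hR : IsWeibullType P R β γ)
    (hRm : Measurable R)
    (hRS : IndepFun R S P) (hS : P.map S = gaussianReal 0 v) (hv₀ : 0 < v) (hv₁ : v < 1)
    (hRZ : IndepFun R Z P) (hZ : P.map Z = gaussianReal 0 1) :
    Tendsto (fun x => P.real {ω | x < R ω * S ω} / P.real {ω | x < R ω * Z ω}) atTop (𝓝 0) := by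
  have ha : 0 < γ / β := div_pos hγ hβ
  have hv₀' : (0 : ℝ) < v := hv₀
  obtain ⟨u, hu, hmin⟩ :=
    exists_forall_rpow_add_div_sq_le ha (by positivity : 0 < 1 / (2 * (v : ℝ))) hβ
  set m := γ / β * u ^ β + 1 / (2 * v) / u ^ 2
  set f₁ := γ / β * u ^ β + 1 / (2 * u ^ 2)
  -- `u` minimises the exponent `m` of `S`; as `v < 1`, the exponent `f₁` of `Z` is smaller at `u`
  have hgap : f₁ < m := by
    have hv₁' : (v : ℝ) < 1 := hv₁
    have : 1 / (2 * u ^ 2) < 1 / (2 * v) / u ^ 2 := by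
      rw [div_div, one_div_lt_one_div (by positivity) (by positivity)]
      nlinarith [pow_pos hu 2]
    linarith
  obtain ⟨K, hK⟩ := exists_measureReal_lt_mul_le_exp (ℓ := (f₁ + 2 * m) / 3) hRS
    (hR.ae_pos hRm) ha (by positivity) hβ (one_le_exp ha.le) (by positivity) (by linarith) hmin
    (fun y hy => hR.measureReal_lt_le hβ.le hγ.le hy)
    (fun s hs => (measureReal_ge_le_of_map_eq_gaussianReal hS hs).trans_eq (by ring_nf))
  obtain ⟨K', hK'pos, hK'⟩ := exists_exp_le_measureReal_lt_mul (ℓ := (2 * f₁ + m) / 3) hRZ hZ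
    hβ (exp_pos _) hu (by linarith)
    (fun y hy => (hR.measureReal_lt_eq hy).ge)
  exact tendsto_div_of_le_exp_of_exp_le hK'pos (by linarith)
    ((tendsto_pow_atTop two_ne_zero).comp (tendsto_rpow_atTop (by positivity)))
    (fun x => measureReal_nonneg) ((eventually_gt_atTop 0).mono hK) hK'

end Probability

theorem hot_model_chi_AI_general
    {Ω : Type*} [MeasurableSpace Ω] (P : Measure Ω) [IsProbabilityMeasure P]
    (β γ ρ : ℝ) (hβ : 0 < β) (hγ : 0 < γ) (hρ₁ : -1 < ρ) (hρ₂ : ρ < 1)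
    (Z₁ Z₀ R : Ω → ℝ)
    (hRmeas : Measurable R)
    (hZ₁ : Measure.map Z₁ P = gaussianReal 0 1)
    (hZ₂ : Measure.map Z₀ P = gaussianReal 0 1)
    (hZindep : IndepFun Z₁ Z₀ P)
    (hRindep : IndepFun R (fun ω => (Z₁ ω, Z₀ ω)) P)
    (hRtail : ∀ x : ℝ, 1 ≤ x → (P {ω | x < R ω}).toReal = Real.exp (-γ * (x ^ β - 1) / β))
    (hRlow : ∀ x : ℝ, x < 1 → (P {ω | x < R ω}).toReal = 1)
    (Z₂ W₁ W₂ : Ω → ℝ)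
    (hZ₂def : ∀ ω, Z₂ ω = ρ * Z₁ ω + Real.sqrt (1 - ρ ^ 2) * Z₀ ω)
    (hW₁ : ∀ ω, W₁ ω = R ω * Z₁ ω) (hW₂ : ∀ ω, W₂ ω = R ω * Z₂ ω) :
    Tendsto (fun x : ℝ =>
        (P {ω | x < W₁ ω ∧ x < W₂ ω}).toReal / (P {ω | x < W₂ ω}).toReal)
      atTop (nhds 0) := by
  obtain rfl : W₁ = fun ω => R ω * Z₁ ω := funext hW₁
  obtain rfl : W₂ = fun ω => R ω * Z₂ ω := funext hW₂
  obtain rfl : Z₂ = fun ω => ρ * Z₁ ω + √(1 - ρ ^ 2) * Z₀ ω := funext hZ₂def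
  set b := √(1 - ρ ^ 2)
  have hb : b ^ 2 = 1 - ρ ^ 2 := sq_sqrt (by nlinarith)
  have hRcomb : ∀ c₁ c₂ : ℝ, IndepFun R (fun ω => c₁ * Z₁ ω + c₂ * Z₀ ω) P := fun c₁ c₂ =>
    hRindep.comp measurable_id (by fun_prop : Measurable fun p : ℝ × ℝ => c₁ * p.1 + c₂ * p.2)
  -- `S = (Z₁ + Z₂) / 2` has variance `(1 + ρ) / 2 < 1`
  set S : Ω → ℝ := fun ω => (1 + ρ) / 2 * Z₁ ω + b / 2 * Z₀ ω
  have hlim := tendsto_measureReal_lt_mul_div_measureReal_lt_mul (S := S)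
    (v := ((1 + ρ) / 2).toNNReal) hβ hγ ⟨hRtail, hRlow⟩ hRmeas (hRcomb _ _)
    (map_add_eq_gaussianReal hZindep hZ₁ hZ₂
      (by rw [Real.coe_toNNReal _ (by linarith)]; linear_combination (-1 / 4) * hb))
    (Real.toNNReal_pos.2 (by linarith)) (Real.toNNReal_lt_one.2 (by linarith)) (hRcomb ρ b)
    (map_add_eq_gaussianReal hZindep hZ₁ hZ₂ (by push_cast; linear_combination -hb))
  refine tendsto_of_tendsto_of_tendsto_of_le_of_le tendsto_const_nhds hlim
    (fun x => div_nonneg measureReal_nonneg measureReal_nonneg) fun x => ?_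
  refine div_le_div_of_nonneg_right (measureReal_mono fun ω ⟨h₁, h₂⟩ => ?_) measureReal_nonneg
  change x < R ω * S ω
  linear_combination (h₁ + h₂) / 2

/-- (χ = 0 for the HOT model when β > 0.) Let `Z₁, Z₀` be independent
standard normals, `Z₂ = ρ Z₁ + √(1-ρ²) Z₀` for ρ ∈ (-1,1), and let `R` be
Weibull-type(β,γ) with β > 0, γ > 0, independent of `(Z₁, Z₀)`. With `W i = R·Z i`,
`P(W₁ > x and W₂ > x) / P(W₂ > x) → 0` as `x → ∞` (asymptotic independence). -/
theorem hot_model_chi_AI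
    {Ω : Type*} [MeasurableSpace Ω] (P : Measure Ω) [IsProbabilityMeasure P]
    (β γ ρ : ℝ) (hβ : 0 < β) (hγ : 0 < γ) (hρ₁ : -1 < ρ) (hρ₂ : ρ < 1)
    (Z₁ Z₀ R : Ω → ℝ)
    (hZ₁meas : Measurable Z₁) (hZ₀meas : Measurable Z₀) (hRmeas : Measurable R)
    (hZ₁ : Measure.map Z₁ P = gaussianReal 0 1)
    (hZ₂ : Measure.map Z₀ P = gaussianReal 0 1)
    (hZindep : IndepFun Z₁ Z₀ P)
    (hRindep : IndepFun R (fun ω => (Z₁ ω, Z₀ ω)) P)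
    (hRtail : ∀ x : ℝ, 1 ≤ x → (P {ω | x < R ω}).toReal = Real.exp (-γ * (x ^ β - 1) / β))
    (hRlow : ∀ x : ℝ, x < 1 → (P {ω | x < R ω}).toReal = 1)
    (Z₂ W₁ W₂ : Ω → ℝ)
    (hZ₂def : ∀ ω, Z₂ ω = ρ * Z₁ ω + Real.sqrt (1 - ρ ^ 2) * Z₀ ω)
    (hW₁ : ∀ ω, W₁ ω = R ω * Z₁ ω) (hW₂ : ∀ ω, W₂ ω = R ω * Z₂ ω) :
    Tendsto (fun x : ℝ =>
        (P {ω | x < W₁ ω ∧ x < W₂ ω}).toReal / (P {ω | x < W₂ ω}).toReal)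
      atTop (nhds 0) :=
  hot_model_chi_AI_general P β γ ρ hβ hγ hρ₁ hρ₂ Z₁ Z₀ R hRmeas hZ₁ hZ₂ hZindep hRindep hRtail hRlow
    Z₂ W₁ W₂ hZ₂def hW₁ hW₂
end

section
/- Let γ > 0, let w_1, …, w_K ≥ 0 with Σ_{k=1}^K w_k > 0, and let r_1, …, r_K ≥ 1 be fixed real numbers. Then lim_{β→0+} (1 + β · log[ Σ_{k=1}^K w_k exp((r_k^β − 1)/β) ])^{1/β} = Σ_{k=1}^K w_k r_k. That is, the β > 0 low-rank scale construction converges pointwise to the β = 0 construction as β decreases to 0. -/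
/-!
Each exponent `(r_k^β - 1)/β` is the difference quotient of `β ↦ r_k^β` at `0`, so it tends to
`log r_k`, and the inner sum tends to `L = ∑ w_k r_k > 0`. Writing `a(β) = log(∑ …) → log L`,
the substitution `x = 1/β` turns `(1 + β a(β))^{1/β}` into the compound-interest limit
`(1 + g x)^x → exp(lim x g x)`, which gives `exp (log L) = L`.
-/

open Filter Topology

namespace Real

theorem tendsto_rpow_sub_one_div {r : ℝ} (hr : 0 < r) :
    Tendsto (fun β : ℝ => (r ^ β - 1) / β) (𝓝[≠] 0) (𝓝 (log r)) := by
  have h := hasDerivAt_iff_tendsto_slope.mp (hasStrictDerivAt_const_rpow hr 0).hasDerivAt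
  simpa [slope_fun_def, div_eq_inv_mul] using h

theorem tendsto_one_add_mul_rpow_one_div {a : ℝ → ℝ} {t : ℝ}
    (ha : Tendsto a (𝓝[>] 0) (𝓝 t)) :
    Tendsto (fun β : ℝ => (1 + β * a β) ^ (1 / β)) (𝓝[>] 0) (𝓝 (exp t)) := by
  have hx : Tendsto (fun x : ℝ => x * (x⁻¹ * a x⁻¹)) atTop (𝓝 t) := by
    refine (ha.comp tendsto_inv_atTop_nhdsGT_zero).congr' ?_
    filter_upwards [eventually_ne_atTop 0] with x hx
    simp [hx]
  simpa [Function.comp_def, one_div] using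
    (tendsto_one_add_rpow_exp_of_tendsto hx).comp tendsto_inv_nhdsGT_zero

end Real

theorem lowrank_scale_tendsto_beta_zero_general
    (K : ℕ) (w r : Fin K → ℝ)
    (hw : ∀ k, 0 ≤ w k) (hwsum : 0 < ∑ k, w k) (hr : ∀ k, 1 ≤ r k) :
    Tendsto (fun β : ℝ =>
        (1 + β * Real.log (∑ k, w k * Real.exp ((r k ^ β - 1) / β))) ^ (1 / β))
      (nhdsWithin 0 (Set.Ioi 0)) (nhds (∑ k, w k * r k)) := by
  have hr_pos : ∀ k, 0 < r k := fun k => one_pos.trans_le (hr k)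
  have hL : 0 < ∑ k, w k * r k :=
    hwsum.trans_le (Finset.sum_le_sum fun k _ => le_mul_of_one_le_right (hw k) (hr k))
  have hsum : Tendsto (fun β : ℝ => ∑ k, w k * Real.exp ((r k ^ β - 1) / β)) (𝓝[>] 0)
      (𝓝 (∑ k, w k * r k)) := by
    refine tendsto_finsetSum _ fun k _ => ?_
    have hexp := ((Real.tendsto_rpow_sub_one_div (hr_pos k)).mono_left (nhdsGT_le_nhdsNE 0)).rexp
    simpa [Real.exp_log (hr_pos k)] using hexp.const_mul (w k)
  simpa [Real.exp_log hL] using Real.tendsto_one_add_mul_rpow_one_div (hsum.log hL.ne')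

/-- For γ > 0, nonnegative weights `w k` with positive sum, and fixed
reals `r k ≥ 1`, the β > 0 low-rank scale construction converges pointwise to the β = 0
construction as β decreases to 0:
`(1 + β·log[∑ k, w k · exp((r k^β - 1)/β)])^(1/β) → ∑ k, w k · r k` as `β → 0⁺`. -/
theorem lowrank_scale_tendsto_beta_zero
    (γ : ℝ) (hγ : 0 < γ) (K : ℕ) (w r : Fin K → ℝ)
    (hw : ∀ k, 0 ≤ w k) (hwsum : 0 < ∑ k, w k) (hr : ∀ k, 1 ≤ r k) :
    Tendsto (fun β : ℝ =>
        (1 + β * Real.log (∑ k, w k * Real.exp ((r k ^ β - 1) / β))) ^ (1 / β))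
      (nhdsWithin 0 (Set.Ioi 0)) (nhds (∑ k, w k * r k)) :=
  lowrank_scale_tendsto_beta_zero_general K w r hw hwsum hr
end
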